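/- arXiv:2206.03038 — 4 statements merged into one kernel-verified Lean document; each statement's English description precedes it below -/
import Mathlib

section
/- Under the permutation null distribution, for all integers 0 ≤ t1 < t2 ≤ n, the variance of U1^π(t1,t2) equals A(t2 − t1)·(r_d² − r0²) + B(t2 − t1)·(r1² − r0²). -/
open Finset

namespace RING

/-- `U1^π(t1,t2)`: sum of `R (π i) (π j)` over indices (1-based `i,j ∈ {1,…,n}`,
represented by `Fin n` with `i` standing for index `i+1`) with `t1 < i ≤ t2` and
`t1 < j ≤ t2`. -/
noncomputable def U1 (n : ℕ) (R : Fin n → Fin n → ℝ) (π : Equiv.Perm (Fin n))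
    (t1 t2 : ℕ) : ℝ :=
  ∑ i : Fin n, ∑ j : Fin n,
    if t1 ≤ (i : ℕ) ∧ (i : ℕ) < t2 ∧ t1 ≤ (j : ℕ) ∧ (j : ℕ) < t2 then R (π i) (π j) else 0

/-- `U2^π(t1,t2)`: sum of `R (π i) (π j)` over indices with `i ≤ t1` or `i > t2`,
and `j ≤ t1` or `j > t2`. -/
noncomputable def U2 (n : ℕ) (R : Fin n → Fin n → ℝ) (π : Equiv.Perm (Fin n))
    (t1 t2 : ℕ) : ℝ :=
  ∑ i : Fin n, ∑ j : Fin n,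
    if ((i : ℕ) < t1 ∨ t2 ≤ (i : ℕ)) ∧ ((j : ℕ) < t1 ∨ t2 ≤ (j : ℕ)) then R (π i) (π j) else 0

/-- Expectation under the permutation null distribution (uniform over all `n!`
permutations). -/
noncomputable def pexp (n : ℕ) (f : Equiv.Perm (Fin n) → ℝ) : ℝ :=
  (∑ π : Equiv.Perm (Fin n), f π) / (Nat.factorial n)

/-- Variance under the permutation null distribution. -/
noncomputable def pvar (n : ℕ) (f : Equiv.Perm (Fin n) → ℝ) : ℝ :=
  pexp n (fun π => (f π - pexp n f) ^ 2)

/-- Covariance under the permutation null distribution. -/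
noncomputable def pcov (n : ℕ) (f g : Equiv.Perm (Fin n) → ℝ) : ℝ :=
  pexp n (fun π => (f π - pexp n f) * (g π - pexp n g))

/-- `R̄_{i·} = (Σ_j R_{ij})/(n-1)`. -/
noncomputable def Rbar (n : ℕ) (R : Fin n → Fin n → ℝ) (i : Fin n) : ℝ :=
  (∑ j : Fin n, R i j) / ((n : ℝ) - 1)

/-- `r0 = (1/n) Σ_i R̄_{i·}`. -/
noncomputable def r0 (n : ℕ) (R : Fin n → Fin n → ℝ) : ℝ :=
  (∑ i : Fin n, Rbar n R i) / n

/-- `r1² = (1/n) Σ_i R̄_{i·}²`. -/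
noncomputable def r1sq (n : ℕ) (R : Fin n → Fin n → ℝ) : ℝ :=
  (∑ i : Fin n, (Rbar n R i) ^ 2) / n

/-- `r_d² = (1/(n(n-1))) Σ_i Σ_j R_{ij}²`. -/
noncomputable def rdsq (n : ℕ) (R : Fin n → Fin n → ℝ) : ℝ :=
  (∑ i : Fin n, ∑ j : Fin n, (R i j) ^ 2) / ((n : ℝ) * ((n : ℝ) - 1))

/-- `A(t) = 2t(t-1)(n-t)(n-t-1)/((n-2)(n-3))`. -/
noncomputable def A (n t : ℕ) : ℝ :=
  2 * (t : ℝ) * ((t : ℝ) - 1) * ((n : ℝ) - t) * ((n : ℝ) - t - 1) /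
    (((n : ℝ) - 2) * ((n : ℝ) - 3))

/-- `B(t) = 4t(n-t)(t-1)(t-2)(n-1)/((n-2)(n-3))`. -/
noncomputable def B (n t : ℕ) : ℝ :=
  4 * (t : ℝ) * ((n : ℝ) - t) * ((t : ℝ) - 1) * ((t : ℝ) - 2) * ((n : ℝ) - 1) /
    (((n : ℝ) - 2) * ((n : ℝ) - 3))

/-- `U_diff^π = U1^π − U2^π`. -/
noncomputable def Udiff (n : ℕ) (R : Fin n → Fin n → ℝ) (π : Equiv.Perm (Fin n))
    (t1 t2 : ℕ) : ℝ :=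
  U1 n R π t1 t2 - U2 n R π t1 t2

/-- `U_w^π = ((n−t2+t1−1)·U1^π + (t2−t1−1)·U2^π)/(n−2)`. -/
noncomputable def Uw (n : ℕ) (R : Fin n → Fin n → ℝ) (π : Equiv.Perm (Fin n))
    (t1 t2 : ℕ) : ℝ :=
  (((n : ℝ) - t2 + t1 - 1) * U1 n R π t1 t2 + ((t2 : ℝ) - t1 - 1) * U2 n R π t1 t2) /
    ((n : ℝ) - 2)

/-- Standardized `Z_w^π(t1,t2)`. -/
noncomputable def Zw (n : ℕ) (R : Fin n → Fin n → ℝ) (π : Equiv.Perm (Fin n))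
    (t1 t2 : ℕ) : ℝ :=
  (Uw n R π t1 t2 - pexp n (fun σ => Uw n R σ t1 t2)) /
    Real.sqrt (pvar n (fun σ => Uw n R σ t1 t2))

/-- Standardized `Z_diff^π(t1,t2)`. -/
noncomputable def Zdiff (n : ℕ) (R : Fin n → Fin n → ℝ) (π : Equiv.Perm (Fin n))
    (t1 t2 : ℕ) : ℝ :=
  (Udiff n R π t1 t2 - pexp n (fun σ => Udiff n R σ t1 t2)) /
    Real.sqrt (pvar n (fun σ => Udiff n R σ t1 t2))

end RING

namespace RINGAux

open Finset

variable {n : ℕ}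

/-- Kronecker delta as a real. -/
noncomputable def dd (a b : Fin n) : ℝ := if a = b then 1 else 0

lemma dd_self (a : Fin n) : dd a a = 1 := by simp [dd]

lemma dd_of_ne {a b : Fin n} (h : a ≠ b) : dd a b = 0 := by simp [dd, h]

lemma sum_dd {S : Finset (Fin n)} {a : Fin n} (ha : a ∈ S) :
    ∑ x ∈ S, dd a x = 1 := by
  unfold dd
  rw [Finset.sum_ite_eq S a (fun _ => (1:ℝ))]
  simp [ha]

lemma sum_dd_mul {S : Finset (Fin n)} {a : Fin n} (b : Fin n) (ha : a ∈ S) :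
    ∑ x ∈ S, dd a x * dd b x = dd b a := by
  unfold dd
  simp only [ite_mul, one_mul, zero_mul]
  rw [Finset.sum_ite_eq S a (fun x => if b = x then (1:ℝ) else 0)]
  simp [ha]

lemma one_sub_dd_mul (a b : Fin n) : (1 - dd a b) * dd b a = 0 := by
  unfold dd; by_cases h : a = b
  · subst h; simp
  · simp [h, Ne.symm h]

lemma one_sub_dd_sq (a b : Fin n) : (1 - dd a b) * (1 - dd b a) = 1 - dd a b := by
  unfold dd; by_cases h : a = b
  · subst h; simp
  · simp [h, Ne.symm h]

/-- A permutation sending prescribed (distinct) sources to prescribed (distinct) targets. -/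
lemma exists_perm_of_list (l : List (Fin n × Fin n))
    (h1 : (l.map Prod.fst).Nodup) (h2 : (l.map Prod.snd).Nodup) :
    ∃ σ : Equiv.Perm (Fin n), ∀ p ∈ l, σ p.1 = p.2 := by
  induction l with
  | nil => exact ⟨1, by simp⟩
  | cons p l ih =>
      simp only [List.map_cons, List.nodup_cons, List.mem_map] at h1 h2
      obtain ⟨σ', hσ'⟩ := ih h1.2 h2.2
      refine ⟨σ'.trans (Equiv.swap (σ' p.1) p.2), ?_⟩
      intro q hq
      rcases List.mem_cons.1 hq with hq | hq
      · subst hq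
        simp [Equiv.swap_apply_left]
      · have hq2 : σ' q.1 = q.2 := hσ' q hq
        have hne1 : q.2 ≠ σ' p.1 := by
          intro h
          exact h1.1 ⟨q, hq, σ'.injective (hq2.trans h).symm ▸ rfl⟩
        have hne2 : q.2 ≠ p.2 := by
          intro h
          exact h2.1 ⟨q, hq, h⟩
        simp [hq2, Equiv.swap_apply_of_ne_of_ne hne1 hne2]

lemma sum_perm_transport (f : Equiv.Perm (Fin n) → ℝ) (σ : Equiv.Perm (Fin n)) :
    ∑ π : Equiv.Perm (Fin n), f (π * σ) = ∑ π : Equiv.Perm (Fin n), f π :=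
  Equiv.sum_comp (Equiv.mulRight σ) f

variable (R : Fin n → Fin n → ℝ)

lemma pat1 {i j i' j' : Fin n} (hij : i ≠ j) (hij' : i' ≠ j') :
    ∑ π : Equiv.Perm (Fin n), R (π i) (π j)
      = ∑ π : Equiv.Perm (Fin n), R (π i') (π j') := by
  obtain ⟨σ, hσ⟩ := exists_perm_of_list [(i', i), (j', j)]
    (by simp [hij']) (by simp [hij])
  have h1 : σ i' = i := hσ (i', i) (by simp)
  have h2 : σ j' = j := hσ (j', j) (by simp)
  calc ∑ π : Equiv.Perm (Fin n), R (π i) (π j)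
      = ∑ π : Equiv.Perm (Fin n),
          (fun ρ : Equiv.Perm (Fin n) => R (ρ i') (ρ j')) (π * σ) := by
        refine Finset.sum_congr rfl fun π _ => ?_
        simp only [Equiv.Perm.mul_apply, h1, h2]
    _ = _ := sum_perm_transport (fun ρ => R (ρ i') (ρ j')) σ

lemma pat2 {i j i' j' : Fin n} (hij : i ≠ j) (hij' : i' ≠ j') :
    ∑ π : Equiv.Perm (Fin n), R (π i) (π j) * R (π i) (π j)
      = ∑ π : Equiv.Perm (Fin n), R (π i') (π j') * R (π i') (π j') := by
  obtain ⟨σ, hσ⟩ := exists_perm_of_list [(i', i), (j', j)]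
    (by simp [hij']) (by simp [hij])
  have h1 : σ i' = i := hσ (i', i) (by simp)
  have h2 : σ j' = j := hσ (j', j) (by simp)
  calc ∑ π : Equiv.Perm (Fin n), R (π i) (π j) * R (π i) (π j)
      = ∑ π : Equiv.Perm (Fin n),
          (fun ρ : Equiv.Perm (Fin n) => R (ρ i') (ρ j') * R (ρ i') (ρ j')) (π * σ) := by
        refine Finset.sum_congr rfl fun π _ => ?_
        simp only [Equiv.Perm.mul_apply, h1, h2]
    _ = _ := sum_perm_transport (fun ρ => R (ρ i') (ρ j') * R (ρ i') (ρ j')) σ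

lemma pat3 {i j k i' j' k' : Fin n} (hij : i ≠ j) (hik : i ≠ k) (hjk : j ≠ k)
    (hij' : i' ≠ j') (hik' : i' ≠ k') (hjk' : j' ≠ k') :
    ∑ π : Equiv.Perm (Fin n), R (π i) (π j) * R (π i) (π k)
      = ∑ π : Equiv.Perm (Fin n), R (π i') (π j') * R (π i') (π k') := by
  obtain ⟨σ, hσ⟩ := exists_perm_of_list [(i', i), (j', j), (k', k)]
    (by simp [hij', hik', hjk']) (by simp [hij, hik, hjk])
  have h1 : σ i' = i := hσ (i', i) (by simp)
  have h2 : σ j' = j := hσ (j', j) (by simp)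
  have h3 : σ k' = k := hσ (k', k) (by simp)
  calc ∑ π : Equiv.Perm (Fin n), R (π i) (π j) * R (π i) (π k)
      = ∑ π : Equiv.Perm (Fin n),
          (fun ρ : Equiv.Perm (Fin n) => R (ρ i') (ρ j') * R (ρ i') (ρ k')) (π * σ) := by
        refine Finset.sum_congr rfl fun π _ => ?_
        simp only [Equiv.Perm.mul_apply, h1, h2, h3]
    _ = _ := sum_perm_transport (fun ρ => R (ρ i') (ρ j') * R (ρ i') (ρ k')) σ

lemma pat4 {i j k l i' j' k' l' : Fin n}
    (hij : i ≠ j) (hik : i ≠ k) (hil : i ≠ l) (hjk : j ≠ k) (hjl : j ≠ l) (hkl : k ≠ l)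
    (hij' : i' ≠ j') (hik' : i' ≠ k') (hil' : i' ≠ l') (hjk' : j' ≠ k')
    (hjl' : j' ≠ l') (hkl' : k' ≠ l') :
    ∑ π : Equiv.Perm (Fin n), R (π i) (π j) * R (π k) (π l)
      = ∑ π : Equiv.Perm (Fin n), R (π i') (π j') * R (π k') (π l') := by
  obtain ⟨σ, hσ⟩ := exists_perm_of_list [(i', i), (j', j), (k', k), (l', l)]
    (by simp [hij', hik', hil', hjk', hjl', hkl'])
    (by simp [hij, hik, hil, hjk, hjl, hkl])
  have h1 : σ i' = i := hσ (i', i) (by simp)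
  have h2 : σ j' = j := hσ (j', j) (by simp)
  have h3 : σ k' = k := hσ (k', k) (by simp)
  have h4 : σ l' = l := hσ (l', l) (by simp)
  calc ∑ π : Equiv.Perm (Fin n), R (π i) (π j) * R (π k) (π l)
      = ∑ π : Equiv.Perm (Fin n),
          (fun ρ : Equiv.Perm (Fin n) => R (ρ i') (ρ j') * R (ρ k') (ρ l')) (π * σ) := by
        refine Finset.sum_congr rfl fun π _ => ?_
        simp only [Equiv.Perm.mul_apply, h1, h2, h3, h4]
    _ = _ := sum_perm_transport (fun ρ => R (ρ i') (ρ j') * R (ρ k') (ρ l')) σ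

lemma cL1 (hdiag : ∀ a, R a a = 0) {e0 e1 : Fin n} (h01 : e0 ≠ e1) (i j : Fin n) :
    ∑ π : Equiv.Perm (Fin n), R (π i) (π j)
      = (1 - dd i j) * (∑ π : Equiv.Perm (Fin n), R (π e0) (π e1)) := by
  by_cases hij : i = j
  · have hz : ∑ π : Equiv.Perm (Fin n), R (π i) (π j) = 0 :=
      Finset.sum_eq_zero fun π _ => by rw [hij, hdiag]
    rw [hz, hij, dd_self]; ring
  · rw [pat1 R hij h01, dd_of_ne hij]; ring

lemma cL2 (hdiag : ∀ a, R a a = 0) {e0 e1 : Fin n} (h01 : e0 ≠ e1) (i j : Fin n) :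
    ∑ π : Equiv.Perm (Fin n), R (π i) (π j) * R (π i) (π j)
      = (1 - dd i j) * (∑ π : Equiv.Perm (Fin n), R (π e0) (π e1) * R (π e0) (π e1)) := by
  by_cases hij : i = j
  · have hz : ∑ π : Equiv.Perm (Fin n), R (π i) (π j) * R (π i) (π j) = 0 :=
      Finset.sum_eq_zero fun π _ => by rw [hij, hdiag]; ring
    rw [hz, hij, dd_self]; ring
  · rw [pat2 R hij h01, dd_of_ne hij]; ring

lemma cL3 (hdiag : ∀ a, R a a = 0) {e0 e1 e2 : Fin n}
    (h01 : e0 ≠ e1) (h02 : e0 ≠ e2) (h12 : e1 ≠ e2) (i j k : Fin n) :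
    ∑ π : Equiv.Perm (Fin n), R (π i) (π j) * R (π i) (π k)
      = (1 - dd i j) * (1 - dd i k) *
        (dd j k * (∑ π : Equiv.Perm (Fin n), R (π e0) (π e1) * R (π e0) (π e1))
          + (1 - dd j k) * (∑ π : Equiv.Perm (Fin n), R (π e0) (π e1) * R (π e0) (π e2))) := by
  by_cases hij : i = j
  · have hz : ∑ π : Equiv.Perm (Fin n), R (π i) (π j) * R (π i) (π k) = 0 :=
      Finset.sum_eq_zero fun π _ => by rw [hij, hdiag]; ring
    rw [hz, hij, dd_self]; ring
  · by_cases hik : i = k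
    · have hz : ∑ π : Equiv.Perm (Fin n), R (π i) (π j) * R (π i) (π k) = 0 :=
        Finset.sum_eq_zero fun π _ => by rw [hik, hdiag (π k)]; ring
      rw [hz, hik, dd_self]; ring
    · by_cases hjk : j = k
      · rw [← hjk, pat2 R hij h01, dd_of_ne hij, dd_self]; ring
      · rw [pat3 R hij hik hjk h01 h02 h12, dd_of_ne hij, dd_of_ne hik, dd_of_ne hjk]
        ring

lemma cL4 (hsym : ∀ a b, R a b = R b a) (hdiag : ∀ a, R a a = 0)
    {e0 e1 e2 e3 : Fin n}
    (h01 : e0 ≠ e1) (h02 : e0 ≠ e2) (h03 : e0 ≠ e3)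
    (h12 : e1 ≠ e2) (h13 : e1 ≠ e3) (h23 : e2 ≠ e3) (i j k l : Fin n) :
    ∑ π : Equiv.Perm (Fin n), R (π i) (π j) * R (π k) (π l)
      = (1 - dd i j) * (1 - dd k l) *
        ((∑ π : Equiv.Perm (Fin n), R (π e0) (π e1) * R (π e2) (π e3))
          + ((∑ π : Equiv.Perm (Fin n), R (π e0) (π e1) * R (π e0) (π e2))
              - (∑ π : Equiv.Perm (Fin n), R (π e0) (π e1) * R (π e2) (π e3)))
            * (dd i k + dd i l + dd j k + dd j l)
          + ((∑ π : Equiv.Perm (Fin n), R (π e0) (π e1) * R (π e0) (π e1))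
              - 2 * (∑ π : Equiv.Perm (Fin n), R (π e0) (π e1) * R (π e0) (π e2))
              + (∑ π : Equiv.Perm (Fin n), R (π e0) (π e1) * R (π e2) (π e3)))
            * (dd i k * dd j l + dd i l * dd j k)) := by
  by_cases hij : i = j
  · have hz : ∑ π : Equiv.Perm (Fin n), R (π i) (π j) * R (π k) (π l) = 0 :=
      Finset.sum_eq_zero fun π _ => by rw [hij, hdiag]; ring
    rw [hz, hij, dd_self]; ring
  · by_cases hkl : k = l
    · have hz : ∑ π : Equiv.Perm (Fin n), R (π i) (π j) * R (π k) (π l) = 0 :=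
        Finset.sum_eq_zero fun π _ => by rw [hkl, hdiag (π l)]; ring
      rw [hz, hkl, dd_self]; ring
    · by_cases hik : i = k
      · rw [← hik]
        have hil' : i ≠ l := fun h => hkl (hik.symm.trans h)
        by_cases hjl : j = l
        · rw [← hjl, pat2 R hij h01, dd_self i, dd_self j, dd_of_ne hij,
            dd_of_ne (Ne.symm hij)]
          ring
        · rw [pat3 R hij hil' hjl h01 h02 h12, dd_self, dd_of_ne hij,
            dd_of_ne hil', dd_of_ne hjl, dd_of_ne (Ne.symm hij)]
          ring
      · by_cases hil : i = l
        · rw [← hil]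
          have hki : k ≠ i := fun h => hik h.symm
          by_cases hjk : j = k
          · rw [← hjk]
            have hrw : ∑ π : Equiv.Perm (Fin n), R (π i) (π j) * R (π j) (π i)
                = ∑ π : Equiv.Perm (Fin n), R (π i) (π j) * R (π i) (π j) :=
              Finset.sum_congr rfl fun π _ => by rw [hsym (π j) (π i)]
            rw [hrw, pat2 R hij h01, dd_self, dd_self, dd_of_ne hij,
              dd_of_ne (Ne.symm hij)]
            ring
          · have hrw : ∑ π : Equiv.Perm (Fin n), R (π i) (π j) * R (π k) (π i)
                = ∑ π : Equiv.Perm (Fin n), R (π i) (π j) * R (π i) (π k) :=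
              Finset.sum_congr rfl fun π _ => by rw [hsym (π k) (π i)]
            rw [hrw, pat3 R hij hik hjk h01 h02 h12, dd_self, dd_of_ne hij,
              dd_of_ne hik, dd_of_ne hjk, dd_of_ne hki, dd_of_ne (Ne.symm hij)]
            ring
        · by_cases hjk : j = k
          · rw [← hjk]
            have hjl' : j ≠ l := fun h => hkl (hjk.symm.trans h)
            have hrw : ∑ π : Equiv.Perm (Fin n), R (π i) (π j) * R (π j) (π l)
                = ∑ π : Equiv.Perm (Fin n), R (π j) (π i) * R (π j) (π l) :=
              Finset.sum_congr rfl fun π _ => by rw [hsym (π i) (π j)]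
            rw [hrw, pat3 R (Ne.symm hij) hjl' hil h01 h02 h12, dd_self,
              dd_of_ne hij, dd_of_ne hjl', dd_of_ne hil]
            ring
          · by_cases hjl : j = l
            · rw [← hjl]
              have hkj : k ≠ j := fun h => hjk h.symm
              have hrw : ∑ π : Equiv.Perm (Fin n), R (π i) (π j) * R (π k) (π j)
                  = ∑ π : Equiv.Perm (Fin n), R (π j) (π i) * R (π j) (π k) :=
                Finset.sum_congr rfl fun π _ => by rw [hsym (π i) (π j), hsym (π k) (π j)]
              rw [hrw, pat3 R (Ne.symm hij) hjk hik h01 h02 h12, dd_self,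
                dd_of_ne hij, dd_of_ne hkj, dd_of_ne hik, dd_of_ne hjk]
              ring
            · rw [pat4 R hij hik hil hjk hjl hkl h01 h02 h03 h12 h13 h23,
                dd_of_ne hij, dd_of_ne hkl, dd_of_ne hik, dd_of_ne hil,
                dd_of_ne hjk, dd_of_ne hjl]
              ring

section Evals
variable (S : Finset (Fin n)) (g1 g2 g3 g4 : ℝ)

lemma lvl4_l {i j k : Fin n} (hi : i ∈ S) (hj : j ∈ S) (hk : k ∈ S) :
    ∑ l ∈ S, (1 - dd i j) * (1 - dd k l) *
        (g4 + (g3 - g4) * (dd i k + dd i l + dd j k + dd j l)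
          + (g2 - 2*g3 + g4) * (dd i k * dd j l + dd i l * dd j k))
      = (1 - dd i j) *
        (((S.card : ℝ) - 1) * (g4 + (g3 - g4) * (dd i k + dd j k))
          + ((g3 - g4) + (g2 - 2*g3 + g4) * dd j k) * (1 - dd i k)
          + ((g3 - g4) + (g2 - 2*g3 + g4) * dd i k) * (1 - dd j k)) := by
  have key : ∀ l ∈ S,
      (1 - dd i j) * (1 - dd k l) *
        (g4 + (g3 - g4) * (dd i k + dd i l + dd j k + dd j l)
          + (g2 - 2*g3 + g4) * (dd i k * dd j l + dd i l * dd j k))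
      = ((1 - dd i j) * (g4 + (g3 - g4) * (dd i k + dd j k)))
          - ((1 - dd i j) * (g4 + (g3 - g4) * (dd i k + dd j k))) * dd k l
        + ((1 - dd i j) * ((g3 - g4) + (g2 - 2*g3 + g4) * dd j k)) * dd i l
          - ((1 - dd i j) * ((g3 - g4) + (g2 - 2*g3 + g4) * dd j k)) * (dd k l * dd i l)
        + ((1 - dd i j) * ((g3 - g4) + (g2 - 2*g3 + g4) * dd i k)) * dd j l
          - ((1 - dd i j) * ((g3 - g4) + (g2 - 2*g3 + g4) * dd i k)) * (dd k l * dd j l) :=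
    fun l _ => by ring
  rw [Finset.sum_congr rfl key]
  simp only [Finset.sum_add_distrib, Finset.sum_sub_distrib, ← Finset.mul_sum,
    Finset.sum_const, nsmul_eq_mul, sum_dd hk, sum_dd hi, sum_dd hj,
    sum_dd_mul i hk, sum_dd_mul j hk]
  ring

lemma lvl4_k {i j : Fin n} (hi : i ∈ S) (hj : j ∈ S) :
    ∑ k ∈ S, (1 - dd i j) *
        (((S.card : ℝ) - 1) * (g4 + (g3 - g4) * (dd i k + dd j k))
          + ((g3 - g4) + (g2 - 2*g3 + g4) * dd j k) * (1 - dd i k)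
          + ((g3 - g4) + (g2 - 2*g3 + g4) * dd i k) * (1 - dd j k))
      = (1 - dd i j) *
        (g4 * (S.card : ℝ) * ((S.card : ℝ) - 1) + 4 * ((S.card : ℝ) - 1) * (g3 - g4)
          + 2 * (g2 - 2*g3 + g4) * (1 - dd j i)) := by
  have key : ∀ k ∈ S,
      (1 - dd i j) *
        (((S.card : ℝ) - 1) * (g4 + (g3 - g4) * (dd i k + dd j k))
          + ((g3 - g4) + (g2 - 2*g3 + g4) * dd j k) * (1 - dd i k)
          + ((g3 - g4) + (g2 - 2*g3 + g4) * dd i k) * (1 - dd j k))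
      = ((1 - dd i j) * (((S.card : ℝ) - 1) * g4 + 2 * (g3 - g4)))
        + ((1 - dd i j) * (((S.card : ℝ) - 1) * (g3 - g4) - (g3 - g4) + (g2 - 2*g3 + g4))) * dd i k
        + ((1 - dd i j) * (((S.card : ℝ) - 1) * (g3 - g4) - (g3 - g4) + (g2 - 2*g3 + g4))) * dd j k
        - (2 * (1 - dd i j) * (g2 - 2*g3 + g4)) * (dd i k * dd j k) :=
    fun k _ => by ring
  rw [Finset.sum_congr rfl key]
  simp only [Finset.sum_add_distrib, Finset.sum_sub_distrib, ← Finset.mul_sum,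
    Finset.sum_const, nsmul_eq_mul, sum_dd hi, sum_dd hj, sum_dd_mul j hi]
  ring

lemma lvl4_j {i : Fin n} (hi : i ∈ S) :
    ∑ j ∈ S, (1 - dd i j) *
        (g4 * (S.card : ℝ) * ((S.card : ℝ) - 1) + 4 * ((S.card : ℝ) - 1) * (g3 - g4)
          + 2 * (g2 - 2*g3 + g4) * (1 - dd j i))
      = ((S.card : ℝ) - 1) *
        (g4 * (S.card : ℝ) * ((S.card : ℝ) - 1) + 4 * ((S.card : ℝ) - 1) * (g3 - g4)
          + 2 * (g2 - 2*g3 + g4)) := by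
  have key : ∀ j ∈ S,
      (1 - dd i j) *
        (g4 * (S.card : ℝ) * ((S.card : ℝ) - 1) + 4 * ((S.card : ℝ) - 1) * (g3 - g4)
          + 2 * (g2 - 2*g3 + g4) * (1 - dd j i))
      = (g4 * (S.card : ℝ) * ((S.card : ℝ) - 1) + 4 * ((S.card : ℝ) - 1) * (g3 - g4)
          + 2 * (g2 - 2*g3 + g4))
        - (g4 * (S.card : ℝ) * ((S.card : ℝ) - 1) + 4 * ((S.card : ℝ) - 1) * (g3 - g4)
          + 2 * (g2 - 2*g3 + g4)) * dd i j := by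
    intro j _
    have h1 := one_sub_dd_sq i j
    linear_combination (2 * (g2 - 2*g3 + g4)) * h1
  rw [Finset.sum_congr rfl key]
  simp only [Finset.sum_add_distrib, Finset.sum_sub_distrib, ← Finset.mul_sum,
    Finset.sum_const, nsmul_eq_mul, sum_dd hi]
  ring

lemma eval4 :
    ∑ i ∈ S, ∑ j ∈ S, ∑ k ∈ S, ∑ l ∈ S,
      (1 - dd i j) * (1 - dd k l) *
        (g4 + (g3 - g4) * (dd i k + dd i l + dd j k + dd j l)
          + (g2 - 2*g3 + g4) * (dd i k * dd j l + dd i l * dd j k))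
      = (S.card : ℝ) * ((S.card : ℝ) - 1) *
        (g4 * (S.card : ℝ) * ((S.card : ℝ) - 1) + 4 * ((S.card : ℝ) - 1) * (g3 - g4)
          + 2 * (g2 - 2*g3 + g4)) := by
  have h1 : ∀ i ∈ S, ∑ j ∈ S, ∑ k ∈ S, ∑ l ∈ S,
      (1 - dd i j) * (1 - dd k l) *
        (g4 + (g3 - g4) * (dd i k + dd i l + dd j k + dd j l)
          + (g2 - 2*g3 + g4) * (dd i k * dd j l + dd i l * dd j k))
      = ((S.card : ℝ) - 1) *
        (g4 * (S.card : ℝ) * ((S.card : ℝ) - 1) + 4 * ((S.card : ℝ) - 1) * (g3 - g4)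
          + 2 * (g2 - 2*g3 + g4)) := by
    intro i hi
    have h2 : ∀ j ∈ S, ∑ k ∈ S, ∑ l ∈ S,
        (1 - dd i j) * (1 - dd k l) *
          (g4 + (g3 - g4) * (dd i k + dd i l + dd j k + dd j l)
            + (g2 - 2*g3 + g4) * (dd i k * dd j l + dd i l * dd j k))
        = (1 - dd i j) *
          (g4 * (S.card : ℝ) * ((S.card : ℝ) - 1) + 4 * ((S.card : ℝ) - 1) * (g3 - g4)
            + 2 * (g2 - 2*g3 + g4) * (1 - dd j i)) := by
      intro j hj
      have h3 : ∀ k ∈ S, ∑ l ∈ S,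
          (1 - dd i j) * (1 - dd k l) *
            (g4 + (g3 - g4) * (dd i k + dd i l + dd j k + dd j l)
              + (g2 - 2*g3 + g4) * (dd i k * dd j l + dd i l * dd j k))
          = (1 - dd i j) *
            (((S.card : ℝ) - 1) * (g4 + (g3 - g4) * (dd i k + dd j k))
              + ((g3 - g4) + (g2 - 2*g3 + g4) * dd j k) * (1 - dd i k)
              + ((g3 - g4) + (g2 - 2*g3 + g4) * dd i k) * (1 - dd j k)) :=
        fun k hk => lvl4_l S g2 g3 g4 hi hj hk
      rw [Finset.sum_congr rfl h3]
      exact lvl4_k S g2 g3 g4 hi hj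
    rw [Finset.sum_congr rfl h2]
    exact lvl4_j S g2 g3 g4 hi
  rw [Finset.sum_congr rfl h1, Finset.sum_const, nsmul_eq_mul]
  ring

lemma eval3 :
    ∑ i ∈ S, ∑ j ∈ S, ∑ k ∈ S,
      (1 - dd i j) * (1 - dd i k) * (dd j k * g2 + (1 - dd j k) * g3)
      = (S.card : ℝ) * ((S.card : ℝ) - 1) * (g2 + g3 * ((S.card : ℝ) - 2)) := by
  have h1 : ∀ i ∈ S, ∑ j ∈ S, ∑ k ∈ S,
      (1 - dd i j) * (1 - dd i k) * (dd j k * g2 + (1 - dd j k) * g3)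
      = ((S.card : ℝ) - 1) * (g2 + g3 * ((S.card : ℝ) - 2)) := by
    intro i hi
    have h2 : ∀ j ∈ S, ∑ k ∈ S,
        (1 - dd i j) * (1 - dd i k) * (dd j k * g2 + (1 - dd j k) * g3)
        = (1 - dd i j) * (g3 * ((S.card : ℝ) - 1) + (g2 - g3) * (1 - dd j i)) := by
      intro j hj
      have key : ∀ k ∈ S,
          (1 - dd i j) * (1 - dd i k) * (dd j k * g2 + (1 - dd j k) * g3)
          = ((1 - dd i j) * g3)
            + ((1 - dd i j) * (g2 - g3)) * dd j k
            - ((1 - dd i j) * g3) * dd i k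
            - ((1 - dd i j) * (g2 - g3)) * (dd i k * dd j k) :=
        fun k _ => by ring
      rw [Finset.sum_congr rfl key]
      simp only [Finset.sum_add_distrib, Finset.sum_sub_distrib, ← Finset.mul_sum,
        Finset.sum_const, nsmul_eq_mul, sum_dd hi, sum_dd hj, sum_dd_mul j hi]
      ring
    rw [Finset.sum_congr rfl h2]
    have key2 : ∀ j ∈ S,
        (1 - dd i j) * (g3 * ((S.card : ℝ) - 1) + (g2 - g3) * (1 - dd j i))
        = (g3 * ((S.card : ℝ) - 1) + (g2 - g3))
          - (g3 * ((S.card : ℝ) - 1) + (g2 - g3)) * dd i j := by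
      intro j _
      have h1' := one_sub_dd_sq i j
      linear_combination (g2 - g3) * h1'
    rw [Finset.sum_congr rfl key2]
    simp only [Finset.sum_add_distrib, Finset.sum_sub_distrib, ← Finset.mul_sum,
      Finset.sum_const, nsmul_eq_mul, sum_dd hi]
    ring
  rw [Finset.sum_congr rfl h1, Finset.sum_const, nsmul_eq_mul]
  ring

lemma eval2 :
    ∑ i ∈ S, ∑ j ∈ S, (1 - dd i j) * g1
      = (S.card : ℝ) * ((S.card : ℝ) - 1) * g1 := by
  have h1 : ∀ i ∈ S, ∑ j ∈ S, (1 - dd i j) * g1 = ((S.card : ℝ) - 1) * g1 := by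
    intro i hi
    have key : ∀ j ∈ S, (1 - dd i j) * g1 = g1 - g1 * dd i j := fun j _ => by ring
    rw [Finset.sum_congr rfl key]
    simp only [Finset.sum_sub_distrib, ← Finset.mul_sum,
      Finset.sum_const, nsmul_eq_mul, sum_dd hi]
    ring
  rw [Finset.sum_congr rfl h1, Finset.sum_const, nsmul_eq_mul]
  ring

end Evals

lemma reindex2 (π : Equiv.Perm (Fin n)) (F : Fin n → Fin n → ℝ) :
    ∑ i : Fin n, ∑ j : Fin n, F (π i) (π j) = ∑ i : Fin n, ∑ j : Fin n, F i j := by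
  calc ∑ i : Fin n, ∑ j : Fin n, F (π i) (π j)
      = ∑ i : Fin n, ∑ j : Fin n, F (π i) j :=
        Finset.sum_congr rfl fun i _ => Equiv.sum_comp π (F (π i))
    _ = _ := Equiv.sum_comp π (fun i => ∑ j : Fin n, F i j)

lemma reindex3 (π : Equiv.Perm (Fin n)) (F : Fin n → Fin n → Fin n → ℝ) :
    ∑ i : Fin n, ∑ j : Fin n, ∑ k : Fin n, F (π i) (π j) (π k)
      = ∑ i : Fin n, ∑ j : Fin n, ∑ k : Fin n, F i j k := by
  calc ∑ i : Fin n, ∑ j : Fin n, ∑ k : Fin n, F (π i) (π j) (π k)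
      = ∑ i : Fin n, ∑ j : Fin n, ∑ k : Fin n, F (π i) (π j) k :=
        Finset.sum_congr rfl fun i _ => Finset.sum_congr rfl fun j _ =>
          Equiv.sum_comp π (F (π i) (π j))
    _ = ∑ i : Fin n, ∑ j : Fin n, ∑ k : Fin n, F (π i) j k :=
        Finset.sum_congr rfl fun i _ => Equiv.sum_comp π (fun j => ∑ k : Fin n, F (π i) j k)
    _ = _ := Equiv.sum_comp π (fun i => ∑ j : Fin n, ∑ k : Fin n, F i j k)

lemma comm2 (A : Finset (Fin n)) (g : Equiv.Perm (Fin n) → Fin n → Fin n → ℝ) :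
    ∑ π : Equiv.Perm (Fin n), ∑ i ∈ A, ∑ j ∈ A, g π i j
      = ∑ i ∈ A, ∑ j ∈ A, ∑ π : Equiv.Perm (Fin n), g π i j := by
  rw [Finset.sum_comm]
  exact Finset.sum_congr rfl fun i _ => Finset.sum_comm

lemma comm3 (A : Finset (Fin n)) (g : Equiv.Perm (Fin n) → Fin n → Fin n → Fin n → ℝ) :
    ∑ π : Equiv.Perm (Fin n), ∑ i ∈ A, ∑ j ∈ A, ∑ k ∈ A, g π i j k
      = ∑ i ∈ A, ∑ j ∈ A, ∑ k ∈ A, ∑ π : Equiv.Perm (Fin n), g π i j k := by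
  rw [Finset.sum_comm]
  refine Finset.sum_congr rfl fun i _ => ?_
  rw [Finset.sum_comm]
  exact Finset.sum_congr rfl fun j _ => Finset.sum_comm

lemma comm4 (A : Finset (Fin n))
    (g : Equiv.Perm (Fin n) → Fin n → Fin n → Fin n → Fin n → ℝ) :
    ∑ π : Equiv.Perm (Fin n), ∑ i ∈ A, ∑ j ∈ A, ∑ k ∈ A, ∑ l ∈ A, g π i j k l
      = ∑ i ∈ A, ∑ j ∈ A, ∑ k ∈ A, ∑ l ∈ A, ∑ π : Equiv.Perm (Fin n), g π i j k l := by
  rw [Finset.sum_comm]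
  refine Finset.sum_congr rfl fun i _ => ?_
  rw [Finset.sum_comm]
  refine Finset.sum_congr rfl fun j _ => ?_
  rw [Finset.sum_comm]
  exact Finset.sum_congr rfl fun k _ => Finset.sum_comm

lemma mul4 (A : Finset (Fin n)) (a : Fin n → Fin n → ℝ) :
    (∑ i ∈ A, ∑ j ∈ A, a i j) * (∑ k ∈ A, ∑ l ∈ A, a k l)
      = ∑ i ∈ A, ∑ j ∈ A, ∑ k ∈ A, ∑ l ∈ A, a i j * a k l := by
  rw [Finset.sum_mul_sum]
  refine Finset.sum_congr rfl fun i _ => ?_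
  calc ∑ k ∈ A, (∑ j ∈ A, a i j) * (∑ l ∈ A, a k l)
      = ∑ k ∈ A, ∑ j ∈ A, ∑ l ∈ A, a i j * a k l :=
        Finset.sum_congr rfl fun k _ => Finset.sum_mul_sum A A _ _
    _ = _ := Finset.sum_comm

lemma card_filter_Ico {t1 t2 : ℕ} (h2n : t2 ≤ n) :
    (Finset.univ.filter (fun i : Fin n => t1 ≤ (i : ℕ) ∧ (i : ℕ) < t2)).card = t2 - t1 := by
  rw [← Nat.card_Ico t1 t2]
  apply Finset.card_bij (fun (i : Fin n) _ => (i : ℕ))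
  · intro a ha
    simp only [Finset.mem_filter] at ha
    simp [Finset.mem_Ico, ha.2.1, ha.2.2]
  · intro a _ b _ h
    exact Fin.ext h
  · intro b hb
    simp only [Finset.mem_Ico] at hb
    exact ⟨⟨b, lt_of_lt_of_le hb.2 h2n⟩, by simp [hb.1, hb.2], rfl⟩

lemma U1_eq (R : Fin n → Fin n → ℝ) (π : Equiv.Perm (Fin n)) (t1 t2 : ℕ) :
    RING.U1 n R π t1 t2
      = ∑ i ∈ Finset.univ.filter (fun i : Fin n => t1 ≤ (i : ℕ) ∧ (i : ℕ) < t2),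
          ∑ j ∈ Finset.univ.filter (fun j : Fin n => t1 ≤ (j : ℕ) ∧ (j : ℕ) < t2),
            R (π i) (π j) := by
  unfold RING.U1
  rw [Finset.sum_filter]
  refine Finset.sum_congr rfl fun i _ => ?_
  by_cases h1 : t1 ≤ (i : ℕ) ∧ (i : ℕ) < t2
  · rw [if_pos h1, Finset.sum_filter]
    refine Finset.sum_congr rfl fun j _ => ?_
    by_cases h2 : t1 ≤ (j : ℕ) ∧ (j : ℕ) < t2
    · rw [if_pos h2, if_pos ⟨h1.1, h1.2, h2.1, h2.2⟩]
    · rw [if_neg h2, if_neg (by tauto)]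
  · rw [if_neg h1]
    exact Finset.sum_eq_zero fun j _ => if_neg (by tauto)

lemma pvar_eq (f : Equiv.Perm (Fin n) → ℝ) :
    RING.pvar n f = RING.pexp n (fun π => f π * f π) - RING.pexp n f * RING.pexp n f := by
  have hF : ((Nat.factorial n : ℕ) : ℝ) ≠ 0 :=
    Nat.cast_ne_zero.2 (Nat.factorial_ne_zero n)
  have hcard : (((Finset.univ : Finset (Equiv.Perm (Fin n))).card : ℕ) : ℝ)
      = ((Nat.factorial n : ℕ) : ℝ) := by
    rw [Finset.card_univ, Fintype.card_perm, Fintype.card_fin]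
  unfold RING.pvar RING.pexp
  have expand : ∑ π : Equiv.Perm (Fin n),
      (f π - (∑ σ : Equiv.Perm (Fin n), f σ) / (Nat.factorial n)) ^ 2
      = ∑ π : Equiv.Perm (Fin n), f π * f π
        - (2 * ((∑ σ : Equiv.Perm (Fin n), f σ) / (Nat.factorial n)))
            * ∑ σ : Equiv.Perm (Fin n), f σ
        + ((Nat.factorial n : ℕ) : ℝ)
            * ((∑ σ : Equiv.Perm (Fin n), f σ) / (Nat.factorial n)) ^ 2 := by
    have key : ∀ π : Equiv.Perm (Fin n),
        (f π - (∑ σ : Equiv.Perm (Fin n), f σ) / (Nat.factorial n)) ^ 2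
        = f π * f π
          - (2 * ((∑ σ : Equiv.Perm (Fin n), f σ) / (Nat.factorial n))) * f π
          + ((∑ σ : Equiv.Perm (Fin n), f σ) / (Nat.factorial n)) ^ 2 :=
      fun π => by ring
    rw [Finset.sum_congr rfl fun π _ => key π]
    simp only [Finset.sum_add_distrib, Finset.sum_sub_distrib, ← Finset.mul_sum,
      Finset.sum_const, nsmul_eq_mul, hcard]
  rw [expand]
  field_simp
  ring

end RINGAux

open RING

set_option maxHeartbeats 4000000 in
open RINGAux in
/-- Under the permutation null distribution, for all integers `0 ≤ t1 < t2 ≤ n`,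
`Var(U1^π(t1,t2)) = A(t2 − t1)(r_d² − r0²) + B(t2 − t1)(r1² − r0²)`. -/
theorem stmt2 (n : ℕ) (hn : 4 ≤ n) (R : Fin n → Fin n → ℝ)
    (hsym : ∀ i j, R i j = R j i) (hdiag : ∀ i, R i i = 0)
    (t1 t2 : ℕ) (h12 : t1 < t2) (h2n : t2 ≤ n) :
    pvar n (fun π => U1 n R π t1 t2)
      = A n (t2 - t1) * (rdsq n R - (r0 n R) ^ 2)
        + B n (t2 - t1) * (r1sq n R - (r0 n R) ^ 2) := by
  classical
  obtain ⟨e0, e1, e2, e3, h01, h02, h03, h12', h13, h23⟩ :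
      ∃ a b c d : Fin n, a ≠ b ∧ a ≠ c ∧ a ≠ d ∧ b ≠ c ∧ b ≠ d ∧ c ≠ d :=
    ⟨⟨0, by omega⟩, ⟨1, by omega⟩, ⟨2, by omega⟩, ⟨3, by omega⟩,
      by simp [Fin.ext_iff], by simp [Fin.ext_iff], by simp [Fin.ext_iff],
      by simp [Fin.ext_iff], by simp [Fin.ext_iff], by simp [Fin.ext_iff]⟩
  obtain ⟨g1, hg1d⟩ : ∃ x : ℝ, x = ∑ π : Equiv.Perm (Fin n), R (π e0) (π e1) := ⟨_, rfl⟩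
  obtain ⟨g2, hg2d⟩ :
      ∃ x : ℝ, x = ∑ π : Equiv.Perm (Fin n), R (π e0) (π e1) * R (π e0) (π e1) := ⟨_, rfl⟩
  obtain ⟨g3, hg3d⟩ :
      ∃ x : ℝ, x = ∑ π : Equiv.Perm (Fin n), R (π e0) (π e1) * R (π e0) (π e2) := ⟨_, rfl⟩
  obtain ⟨g4, hg4d⟩ :
      ∃ x : ℝ, x = ∑ π : Equiv.Perm (Fin n), R (π e0) (π e1) * R (π e2) (π e3) := ⟨_, rfl⟩
  obtain ⟨S1, hS1d⟩ : ∃ x : ℝ, x = ∑ i : Fin n, ∑ j : Fin n, R i j := ⟨_, rfl⟩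
  obtain ⟨S2, hS2d⟩ : ∃ x : ℝ, x = ∑ i : Fin n, ∑ j : Fin n, R i j * R i j := ⟨_, rfl⟩
  obtain ⟨Q, hQd⟩ :
      ∃ x : ℝ, x = ∑ i : Fin n, (∑ j : Fin n, R i j) * (∑ j : Fin n, R i j) := ⟨_, rfl⟩
  set Sf := Finset.univ.filter (fun i : Fin n => t1 ≤ (i : ℕ) ∧ (i : ℕ) < t2) with hSfd
  have hcardS : ((Sf.card : ℕ) : ℝ) = ((t2 - t1 : ℕ) : ℝ) := by
    rw [hSfd, card_filter_Ico h2n]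
  have hNcard : (((Finset.univ : Finset (Fin n)).card : ℕ) : ℝ) = (n : ℝ) := by
    rw [Finset.card_univ, Fintype.card_fin]
  have hFcard : (((Finset.univ : Finset (Equiv.Perm (Fin n))).card : ℕ) : ℝ)
      = ((Nat.factorial n : ℕ) : ℝ) := by
    rw [Finset.card_univ, Fintype.card_perm, Fintype.card_fin]
  have hU1 : ∀ π : Equiv.Perm (Fin n),
      U1 n R π t1 t2 = ∑ i ∈ Sf, ∑ j ∈ Sf, R (π i) (π j) := by
    intro π; rw [hSfd]; exact U1_eq R π t1 t2
  -- first moment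
  have hEU : (∑ π : Equiv.Perm (Fin n), U1 n R π t1 t2)
      = ((t2 - t1 : ℕ) : ℝ) * (((t2 - t1 : ℕ) : ℝ) - 1) * g1 := by
    rw [hg1d, ← hcardS]
    calc ∑ π : Equiv.Perm (Fin n), U1 n R π t1 t2
        = ∑ π : Equiv.Perm (Fin n), ∑ i ∈ Sf, ∑ j ∈ Sf, R (π i) (π j) :=
          Finset.sum_congr rfl fun π _ => hU1 π
      _ = ∑ i ∈ Sf, ∑ j ∈ Sf, ∑ π : Equiv.Perm (Fin n), R (π i) (π j) := comm2 Sf _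
      _ = ∑ i ∈ Sf, ∑ j ∈ Sf,
            (1 - dd i j) * (∑ π : Equiv.Perm (Fin n), R (π e0) (π e1)) :=
          Finset.sum_congr rfl fun i _ => Finset.sum_congr rfl fun j _ =>
            cL1 R hdiag h01 i j
      _ = _ := eval2 Sf _
  -- second moment
  have hEU2 : (∑ π : Equiv.Perm (Fin n), U1 n R π t1 t2 * U1 n R π t1 t2)
      = ((t2 - t1 : ℕ) : ℝ) * (((t2 - t1 : ℕ) : ℝ) - 1) *
          (g4 * ((t2 - t1 : ℕ) : ℝ) * (((t2 - t1 : ℕ) : ℝ) - 1)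
            + 4 * (((t2 - t1 : ℕ) : ℝ) - 1) * (g3 - g4) + 2 * (g2 - 2*g3 + g4)) := by
    rw [hg2d, hg3d, hg4d, ← hcardS]
    calc ∑ π : Equiv.Perm (Fin n), U1 n R π t1 t2 * U1 n R π t1 t2
        = ∑ π : Equiv.Perm (Fin n), ∑ i ∈ Sf, ∑ j ∈ Sf, ∑ k ∈ Sf, ∑ l ∈ Sf,
            R (π i) (π j) * R (π k) (π l) :=
          Finset.sum_congr rfl fun π _ => by
            rw [hU1 π]; exact mul4 Sf (fun a b => R (π a) (π b))
      _ = ∑ i ∈ Sf, ∑ j ∈ Sf, ∑ k ∈ Sf, ∑ l ∈ Sf,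
            ∑ π : Equiv.Perm (Fin n), R (π i) (π j) * R (π k) (π l) := comm4 Sf _
      _ = ∑ i ∈ Sf, ∑ j ∈ Sf, ∑ k ∈ Sf, ∑ l ∈ Sf,
            (1 - dd i j) * (1 - dd k l) *
              ((∑ π : Equiv.Perm (Fin n), R (π e0) (π e1) * R (π e2) (π e3))
                + ((∑ π : Equiv.Perm (Fin n), R (π e0) (π e1) * R (π e0) (π e2))
                    - (∑ π : Equiv.Perm (Fin n), R (π e0) (π e1) * R (π e2) (π e3)))
                  * (dd i k + dd i l + dd j k + dd j l)
                + ((∑ π : Equiv.Perm (Fin n), R (π e0) (π e1) * R (π e0) (π e1))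
                    - 2 * (∑ π : Equiv.Perm (Fin n), R (π e0) (π e1) * R (π e0) (π e2))
                    + (∑ π : Equiv.Perm (Fin n), R (π e0) (π e1) * R (π e2) (π e3)))
                  * (dd i k * dd j l + dd i l * dd j k)) :=
          Finset.sum_congr rfl fun i _ => Finset.sum_congr rfl fun j _ =>
            Finset.sum_congr rfl fun k _ => Finset.sum_congr rfl fun l _ =>
              cL4 R hsym hdiag h01 h02 h03 h12' h13 h23 i j k l
      _ = _ := by
          rw [eval4 Sf
            (∑ π : Equiv.Perm (Fin n), R (π e0) (π e1) * R (π e0) (π e1))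
            (∑ π : Equiv.Perm (Fin n), R (π e0) (π e1) * R (π e0) (π e2))
            (∑ π : Equiv.Perm (Fin n), R (π e0) (π e1) * R (π e2) (π e3))]
  -- g1 in terms of S1
  have hS1 : ((Nat.factorial n : ℕ) : ℝ) * S1 = (n : ℝ) * ((n : ℝ) - 1) * g1 := by
    rw [hg1d, hS1d]
    calc ((Nat.factorial n : ℕ) : ℝ) * (∑ i : Fin n, ∑ j : Fin n, R i j)
        = ∑ _π : Equiv.Perm (Fin n), (∑ i : Fin n, ∑ j : Fin n, R i j) := by
          rw [Finset.sum_const, nsmul_eq_mul, hFcard]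
      _ = ∑ π : Equiv.Perm (Fin n), ∑ i : Fin n, ∑ j : Fin n, R (π i) (π j) :=
          Finset.sum_congr rfl fun π _ => (reindex2 π R).symm
      _ = ∑ i : Fin n, ∑ j : Fin n, ∑ π : Equiv.Perm (Fin n), R (π i) (π j) :=
          comm2 Finset.univ _
      _ = ∑ i : Fin n, ∑ j : Fin n,
            (1 - dd i j) * (∑ π : Equiv.Perm (Fin n), R (π e0) (π e1)) :=
          Finset.sum_congr rfl fun i _ => Finset.sum_congr rfl fun j _ =>
            cL1 R hdiag h01 i j
      _ = _ := by
          rw [eval2 Finset.univ (∑ π : Equiv.Perm (Fin n), R (π e0) (π e1)), hNcard]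
  -- g2 in terms of S2
  have hS2 : ((Nat.factorial n : ℕ) : ℝ) * S2 = (n : ℝ) * ((n : ℝ) - 1) * g2 := by
    rw [hg2d, hS2d]
    calc ((Nat.factorial n : ℕ) : ℝ) * (∑ i : Fin n, ∑ j : Fin n, R i j * R i j)
        = ∑ _π : Equiv.Perm (Fin n), (∑ i : Fin n, ∑ j : Fin n, R i j * R i j) := by
          rw [Finset.sum_const, nsmul_eq_mul, hFcard]
      _ = ∑ π : Equiv.Perm (Fin n), ∑ i : Fin n, ∑ j : Fin n,
            R (π i) (π j) * R (π i) (π j) :=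
          Finset.sum_congr rfl fun π _ =>
            (reindex2 π (fun a b => R a b * R a b)).symm
      _ = ∑ i : Fin n, ∑ j : Fin n, ∑ π : Equiv.Perm (Fin n),
            R (π i) (π j) * R (π i) (π j) := comm2 Finset.univ _
      _ = ∑ i : Fin n, ∑ j : Fin n,
            (1 - dd i j) *
              (∑ π : Equiv.Perm (Fin n), R (π e0) (π e1) * R (π e0) (π e1)) :=
          Finset.sum_congr rfl fun i _ => Finset.sum_congr rfl fun j _ =>
            cL2 R hdiag h01 i j
      _ = _ := by
          rw [eval2 Finset.univ
            (∑ π : Equiv.Perm (Fin n), R (π e0) (π e1) * R (π e0) (π e1)), hNcard]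
  -- Q
  have hQ : ((Nat.factorial n : ℕ) : ℝ) * Q
      = (n : ℝ) * ((n : ℝ) - 1) * (g2 + g3 * ((n : ℝ) - 2)) := by
    rw [hg2d, hg3d, hQd]
    calc ((Nat.factorial n : ℕ) : ℝ)
          * (∑ i : Fin n, (∑ j : Fin n, R i j) * (∑ j : Fin n, R i j))
        = ∑ _π : Equiv.Perm (Fin n),
            (∑ i : Fin n, (∑ j : Fin n, R i j) * (∑ j : Fin n, R i j)) := by
          rw [Finset.sum_const, nsmul_eq_mul, hFcard]
      _ = ∑ _π : Equiv.Perm (Fin n), ∑ i : Fin n, ∑ j : Fin n, ∑ k : Fin n,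
            R i j * R i k :=
          Finset.sum_congr rfl fun π _ => Finset.sum_congr rfl fun i _ =>
            Finset.sum_mul_sum Finset.univ Finset.univ _ _
      _ = ∑ π : Equiv.Perm (Fin n), ∑ i : Fin n, ∑ j : Fin n, ∑ k : Fin n,
            R (π i) (π j) * R (π i) (π k) :=
          Finset.sum_congr rfl fun π _ =>
            (reindex3 π (fun a b c => R a b * R a c)).symm
      _ = ∑ i : Fin n, ∑ j : Fin n, ∑ k : Fin n, ∑ π : Equiv.Perm (Fin n),
            R (π i) (π j) * R (π i) (π k) := comm3 Finset.univ _
      _ = ∑ i : Fin n, ∑ j : Fin n, ∑ k : Fin n,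
            (1 - dd i j) * (1 - dd i k) *
              (dd j k * (∑ π : Equiv.Perm (Fin n), R (π e0) (π e1) * R (π e0) (π e1))
                + (1 - dd j k)
                    * (∑ π : Equiv.Perm (Fin n), R (π e0) (π e1) * R (π e0) (π e2))) :=
          Finset.sum_congr rfl fun i _ => Finset.sum_congr rfl fun j _ =>
            Finset.sum_congr rfl fun k _ => cL3 R hdiag h01 h02 h12' i j k
      _ = _ := by
          rw [eval3 Finset.univ
            (∑ π : Equiv.Perm (Fin n), R (π e0) (π e1) * R (π e0) (π e1))
            (∑ π : Equiv.Perm (Fin n), R (π e0) (π e1) * R (π e0) (π e2)), hNcard]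
  -- S1^2
  have hA : ((Nat.factorial n : ℕ) : ℝ) * (S1 * S1)
      = (n : ℝ) * ((n : ℝ) - 1) *
          (g4 * (n : ℝ) * ((n : ℝ) - 1) + 4 * ((n : ℝ) - 1) * (g3 - g4)
            + 2 * (g2 - 2*g3 + g4)) := by
    rw [hg2d, hg3d, hg4d, hS1d]
    calc ((Nat.factorial n : ℕ) : ℝ)
          * ((∑ i : Fin n, ∑ j : Fin n, R i j) * (∑ i : Fin n, ∑ j : Fin n, R i j))
        = ∑ _π : Equiv.Perm (Fin n),
            ((∑ i : Fin n, ∑ j : Fin n, R i j) * (∑ i : Fin n, ∑ j : Fin n, R i j)) := by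
          rw [Finset.sum_const, nsmul_eq_mul, hFcard]
      _ = ∑ π : Equiv.Perm (Fin n),
            ((∑ i : Fin n, ∑ j : Fin n, R (π i) (π j))
              * (∑ i : Fin n, ∑ j : Fin n, R (π i) (π j))) :=
          Finset.sum_congr rfl fun π _ => by rw [reindex2 π R]
      _ = ∑ π : Equiv.Perm (Fin n), ∑ i : Fin n, ∑ j : Fin n, ∑ k : Fin n, ∑ l : Fin n,
            R (π i) (π j) * R (π k) (π l) :=
          Finset.sum_congr rfl fun π _ => mul4 Finset.univ (fun a b => R (π a) (π b))
      _ = ∑ i : Fin n, ∑ j : Fin n, ∑ k : Fin n, ∑ l : Fin n,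
            ∑ π : Equiv.Perm (Fin n), R (π i) (π j) * R (π k) (π l) :=
          comm4 Finset.univ _
      _ = ∑ i : Fin n, ∑ j : Fin n, ∑ k : Fin n, ∑ l : Fin n,
            (1 - dd i j) * (1 - dd k l) *
              ((∑ π : Equiv.Perm (Fin n), R (π e0) (π e1) * R (π e2) (π e3))
                + ((∑ π : Equiv.Perm (Fin n), R (π e0) (π e1) * R (π e0) (π e2))
                    - (∑ π : Equiv.Perm (Fin n), R (π e0) (π e1) * R (π e2) (π e3)))
                  * (dd i k + dd i l + dd j k + dd j l)
                + ((∑ π : Equiv.Perm (Fin n), R (π e0) (π e1) * R (π e0) (π e1))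
                    - 2 * (∑ π : Equiv.Perm (Fin n), R (π e0) (π e1) * R (π e0) (π e2))
                    + (∑ π : Equiv.Perm (Fin n), R (π e0) (π e1) * R (π e2) (π e3)))
                  * (dd i k * dd j l + dd i l * dd j k)) :=
          Finset.sum_congr rfl fun i _ => Finset.sum_congr rfl fun j _ =>
            Finset.sum_congr rfl fun k _ => Finset.sum_congr rfl fun l _ =>
              cL4 R hsym hdiag h01 h02 h03 h12' h13 h23 i j k l
      _ = _ := by
          rw [eval4 Finset.univ
            (∑ π : Equiv.Perm (Fin n), R (π e0) (π e1) * R (π e0) (π e1))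
            (∑ π : Equiv.Perm (Fin n), R (π e0) (π e1) * R (π e0) (π e2))
            (∑ π : Equiv.Perm (Fin n), R (π e0) (π e1) * R (π e2) (π e3)), hNcard]
  -- r-statistics
  have hr0 : r0 n R = S1 / (((n : ℝ) - 1) * (n : ℝ)) := by
    rw [hS1d]; unfold RING.r0 RING.Rbar
    rw [← Finset.sum_div, div_div]
  have hrd : rdsq n R = S2 / ((n : ℝ) * ((n : ℝ) - 1)) := by
    rw [hS2d]; unfold RING.rdsq
    congr 1
    exact Finset.sum_congr rfl fun i _ => Finset.sum_congr rfl fun j _ => sq (R i j)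
  have hr1 : r1sq n R = Q / ((((n : ℝ) - 1) * ((n : ℝ) - 1)) * (n : ℝ)) := by
    rw [hQd]; unfold RING.r1sq RING.Rbar
    have hpt : ∀ i : Fin n, ((∑ j : Fin n, R i j) / ((n : ℝ) - 1)) ^ 2
        = ((∑ j : Fin n, R i j) * (∑ j : Fin n, R i j)) / (((n : ℝ) - 1) * ((n : ℝ) - 1)) :=
      fun i => by rw [div_pow, pow_two, pow_two]
    rw [Finset.sum_congr rfl fun i _ => hpt i, ← Finset.sum_div, div_div]
  -- nonvanishing
  have hN4 : (4 : ℝ) ≤ (n : ℝ) := by exact_mod_cast hn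
  have hn0 : (n : ℝ) ≠ 0 := ne_of_gt (by linarith)
  have hn1 : (n : ℝ) - 1 ≠ 0 := ne_of_gt (by linarith)
  have hn2 : (n : ℝ) - 2 ≠ 0 := ne_of_gt (by linarith)
  have hn3 : (n : ℝ) - 3 ≠ 0 := ne_of_gt (by linarith)
  have hFne : ((Nat.factorial n : ℕ) : ℝ) ≠ 0 :=
    Nat.cast_ne_zero.2 (Nat.factorial_ne_zero n)
  -- solve for g's
  have hg1v : g1 = ((Nat.factorial n : ℕ) : ℝ) * S1 / ((n : ℝ) * ((n : ℝ) - 1)) := by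
    field_simp
    linear_combination -hS1
  have hg2v : g2 = ((Nat.factorial n : ℕ) : ℝ) * S2 / ((n : ℝ) * ((n : ℝ) - 1)) := by
    field_simp
    linear_combination -hS2
  have hg3v : g3 = ((Nat.factorial n : ℕ) : ℝ) * (Q - S2)
      / ((n : ℝ) * ((n : ℝ) - 1) * ((n : ℝ) - 2)) := by
    field_simp
    linear_combination hS2 - hQ
  have hg4v : g4 = ((Nat.factorial n : ℕ) : ℝ) * (S1 * S1 + 2 * S2 - 4 * Q)
      / ((n : ℝ) * ((n : ℝ) - 1) * ((n : ℝ) - 2) * ((n : ℝ) - 3)) := by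
    field_simp
    linear_combination 4 * hQ - hA - 2 * hS2
  -- final assembly
  rw [pvar_eq (fun π => U1 n R π t1 t2)]
  simp only [RING.pexp]
  rw [hEU2, hEU, hr0, hr1, hrd]
  simp only [RING.A, RING.B]
  rw [hg1v, hg2v, hg3v, hg4v]
  field_simp
  ring
end

section
/- Under the permutation null distribution, for all integers 0 ≤ t1 < t2 ≤ n, the variance of U2^π(t1,t2) equals A(n − t2 + t1)·(r_d² − r0²) + B(n − t2 + t1)·(r1² − r0²). -/
open Finset

open RING

/-!
Let `S` be the set of positions outside the block `(t1, t2]` and `m = #S`. Relabelling by `π`,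
`U2 = ∑ a b, R a b · 1[{a, b} ⊆ π(S)]`, and the probability that the uniformly random set
`π(S)` contains a fixed `k`-set is `(m)_k / (n)_k` (falling factorials). Since `R` has zero
diagonal only genuine pairs occur, so `E[U2²]` is a sum over two pairs `{a, b}`, `{c, d}`
weighted by `(m)_k / (n)_k` with `k = 4, 3, 2` according as the pairs share zero, one or two
points. Inclusion–exclusion turns this into `(∑ R)²`, `∑ (row sums)²` and `∑ R²`, and the
variance rearranges into `A(m)` and `B(m)`.
-/

section PairOverlap

variable {ι : Type*} [DecidableEq ι]

/-- Inclusion–exclusion weights for two pairs `{a, b}`, `{c, d}` sharing zero, one or two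
points. -/
def pairOverlapWeight (a b c d : ι) (x y z : ℝ) : ℝ :=
  x + ((if a = c then 1 else 0) + (if a = d then 1 else 0) + (if b = c then 1 else 0)
      + (if b = d then 1 else 0)) * y
    + ((if a = c then 1 else 0) * (if b = d then 1 else 0)
      + (if a = d then 1 else 0) * (if b = c then 1 else 0)) * z

lemma apply_card_pair_union_pair (f : ℕ → ℝ) {a b c d : ι} (hab : a ≠ b) (hcd : c ≠ d) :
    f #({a, b} ∪ {c, d}) = pairOverlapWeight a b c d (f 4) (f 3 - f 4) (f 2 - 2 * f 3 + f 4) := by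
  unfold pairOverlapWeight
  by_cases hac : a = c <;> by_cases had : a = d <;> by_cases hbc : b = c <;>
    by_cases hbd : b = d <;> simp_all [card_insert_of_notMem, eq_comm] <;> ring_nf

lemma sum_mul_pairOverlapWeight [Fintype ι] (R : ι → ι → ℝ) (hsym : ∀ i j, R i j = R j i)
    (x y z : ℝ) :
    ∑ a, ∑ b, ∑ c, ∑ d, R a b * R c d * pairOverlapWeight a b c d x y z
      = x * (∑ a, ∑ b, R a b) ^ 2 + 4 * y * ∑ a, (∑ b, R a b) ^ 2
        + 2 * z * ∑ a, ∑ b, R a b ^ 2 := by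
  have h0 : ∑ a, ∑ b, ∑ c, ∑ d, R a b * R c d = (∑ a, ∑ b, R a b) ^ 2 := by
    rw [sq, sum_mul]
    simp_rw [sum_mul]
    simp_rw [mul_sum]
  have hac : ∑ a, ∑ b, ∑ c, ∑ d, R a b * R c d * (if a = c then 1 else 0)
      = ∑ a, (∑ b, R a b) ^ 2 := by
    simp [mul_ite, sum_ite_irrel, sq, sum_mul_sum]
  have had : ∑ a, ∑ b, ∑ c, ∑ d, R a b * R c d * (if a = d then 1 else 0)
      = ∑ a, (∑ b, R a b) ^ 2 := by
    simp [mul_ite, sq, sum_mul_sum, hsym]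
  have hbc : ∑ a, ∑ b, ∑ c, ∑ d, R a b * R c d * (if b = c then 1 else 0)
      = ∑ a, (∑ b, R a b) ^ 2 := by
    simp [mul_ite, sq, sum_mul_sum]
    rw [sum_comm]
    simp [hsym]
  have hbd : ∑ a, ∑ b, ∑ c, ∑ d, R a b * R c d * (if b = d then 1 else 0)
      = ∑ a, (∑ b, R a b) ^ 2 := by
    simp [mul_ite, sq, sum_mul_sum]
    rw [sum_comm]
    simp [hsym]
  have hacbd : ∑ a, ∑ b, ∑ c, ∑ d,
      R a b * R c d * ((if a = c then 1 else 0) * (if b = d then 1 else 0))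
        = ∑ a, ∑ b, R a b ^ 2 := by
    simp [mul_ite, sq]
  have hadbc : ∑ a, ∑ b, ∑ c, ∑ d,
      R a b * R c d * ((if a = d then 1 else 0) * (if b = c then 1 else 0))
        = ∑ a, ∑ b, R a b ^ 2 := by
    simp [mul_ite, sq, hsym]
  calc _ = x * ∑ a, ∑ b, ∑ c, ∑ d, R a b * R c d
        + y * (∑ a, ∑ b, ∑ c, ∑ d, R a b * R c d * (if a = c then 1 else 0)
          + ∑ a, ∑ b, ∑ c, ∑ d, R a b * R c d * (if a = d then 1 else 0)
          + ∑ a, ∑ b, ∑ c, ∑ d, R a b * R c d * (if b = c then 1 else 0)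
          + ∑ a, ∑ b, ∑ c, ∑ d, R a b * R c d * (if b = d then 1 else 0))
        + z * (∑ a, ∑ b, ∑ c, ∑ d,
            R a b * R c d * ((if a = c then 1 else 0) * (if b = d then 1 else 0))
          + ∑ a, ∑ b, ∑ c, ∑ d,
            R a b * R c d * ((if a = d then 1 else 0) * (if b = c then 1 else 0))) := by
        simp only [mul_sum, ← sum_add_distrib]
        refine sum_congr rfl fun a _ => sum_congr rfl fun b _ => sum_congr rfl fun c _ =>
          sum_congr rfl fun d _ => ?_
        unfold pairOverlapWeight
        ring
    _ = _ := by
        rw [h0, hac, had, hbc, hbd, hacbd, hadbc]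
        ring

end PairOverlap

lemma cast_descFactorial_eq_prod_range (m k : ℕ) :
    (m.descFactorial k : ℝ) = ∏ j ∈ range k, ((m : ℝ) - j) := by
  rw [← descPochhammer_eval_eq_descFactorial, descPochhammer_eval_eq_prod_range]

namespace RING

variable {n : ℕ}

lemma pexp_const (c : ℝ) : pexp n (fun _ => c) = c := by
  simp [pexp, Finset.card_univ, Fintype.card_perm, Nat.factorial_ne_zero]

lemma pexp_add (f g : Equiv.Perm (Fin n) → ℝ) :
    pexp n (fun π => f π + g π) = pexp n f + pexp n g := by
  simp only [pexp, sum_add_distrib, add_div]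

lemma pexp_const_mul (c : ℝ) (f : Equiv.Perm (Fin n) → ℝ) :
    pexp n (fun π => c * f π) = c * pexp n f := by
  simp only [pexp, ← mul_sum, mul_div_assoc]

lemma pexp_sum {κ : Type*} (s : Finset κ) (f : κ → Equiv.Perm (Fin n) → ℝ) :
    pexp n (fun π => ∑ i ∈ s, f i π) = ∑ i ∈ s, pexp n (f i) := by
  simp only [pexp, sum_comm (s := univ), sum_div]

lemma pexp_comp_mul_left (σ : Equiv.Perm (Fin n)) (f : Equiv.Perm (Fin n) → ℝ) :
    pexp n (fun π => f (σ * π)) = pexp n f := by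
  rw [pexp, pexp, ← Equiv.sum_comp (Equiv.mulLeft σ) f]
  rfl

lemma pvar_eq_pexp_sq_sub (f : Equiv.Perm (Fin n) → ℝ) :
    pvar n f = pexp n (fun π => f π ^ 2) - pexp n f ^ 2 := by
  have hsq : ∀ π, (f π - pexp n f) ^ 2 = f π ^ 2 + (-2 * pexp n f) * f π + pexp n f ^ 2 :=
    fun π => by ring
  simp only [pvar, hsq, pexp_add, pexp_const_mul, pexp_const]
  ring

def coverInd (S T : Finset (Fin n)) (π : Equiv.Perm (Fin n)) : ℝ :=
  if T ⊆ S.map π.toEmbedding then 1 else 0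

lemma coverInd_mul (S T T' : Finset (Fin n)) (π : Equiv.Perm (Fin n)) :
    coverInd S T π * coverInd S T' π = coverInd S (T ∪ T') π := by
  simp only [coverInd, union_subset_iff, ite_zero_mul_ite_zero, mul_one]

noncomputable def coverProb (n m k : ℕ) : ℝ := (m.descFactorial k : ℝ) / n.descFactorial k

/-- By exchangeability the left side depends only on `#T`; averaging it over all `T` of that
size gives `C(#S, #T) / C(n, #T)`. -/
theorem pexp_coverInd (S T : Finset (Fin n)) :
    pexp n (coverInd S T) = coverProb n #S #T := by
  have hexch : ∀ (σ : Equiv.Perm (Fin n)) (T : Finset (Fin n)),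
      pexp n (coverInd S (T.map σ.toEmbedding)) = pexp n (coverInd S T) := by
    intro σ T
    rw [← pexp_comp_mul_left σ]
    simp only [coverInd, Equiv.Perm.mul_def, Equiv.trans_toEmbedding, ← map_map, map_subset_map]
    rfl
  have hsum : ∑ T' ∈ powersetCard #T univ, pexp n (coverInd S T') = (#S).choose #T := by
    rw [← pexp_sum]
    have hcount : ∀ π : Equiv.Perm (Fin n),
        ∑ T' ∈ powersetCard #T univ, coverInd S T' π = (#S).choose #T := by
      intro π
      have hfilter : (powersetCard #T univ).filter (· ⊆ S.map π.toEmbedding)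
          = powersetCard #T (S.map π.toEmbedding) := by
        ext T'
        simp [mem_powersetCard, and_comm]
      simp only [coverInd]
      rw [sum_boole, hfilter, card_powersetCard, card_map]
    simp only [hcount, pexp_const]
  have hconst : ∀ T' ∈ powersetCard #T univ, pexp n (coverInd S T') = pexp n (coverInd S T) := by
    intro T' hT'
    obtain ⟨σ, rfl⟩ := Equiv.Perm.exists_map_finset_eq T T' (mem_powersetCard.1 hT').2.symm
    exact hexch σ T
  rw [sum_congr rfl hconst, sum_const, card_powersetCard, card_univ, Fintype.card_fin,
    nsmul_eq_mul] at hsum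
  have hchoose : (n.choose #T : ℝ) ≠ 0 := by
    exact_mod_cast (Nat.choose_pos (by simpa using card_le_univ T)).ne'
  rw [coverProb, Nat.descFactorial_eq_factorial_mul_choose,
    Nat.descFactorial_eq_factorial_mul_choose, Nat.cast_mul, Nat.cast_mul,
    mul_div_mul_left _ _ (by positivity), eq_div_iff hchoose, mul_comm, hsum]

def withinSum (R : Fin n → Fin n → ℝ) (S : Finset (Fin n)) (π : Equiv.Perm (Fin n)) : ℝ :=
  ∑ i ∈ S, ∑ j ∈ S, R (π i) (π j)

lemma withinSum_eq_sum_coverInd (R : Fin n → Fin n → ℝ) (S : Finset (Fin n))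
    (π : Equiv.Perm (Fin n)) :
    withinSum R S π = ∑ a, ∑ b, R a b * coverInd S {a, b} π := by
  rw [← Equiv.sum_comp π]
  simp_rw [← Equiv.sum_comp π (fun b => R (π _) b * _)]
  simp [withinSum, coverInd, insert_subset_iff, ite_and]

lemma U2_eq_withinSum (R : Fin n → Fin n → ℝ) (π : Equiv.Perm (Fin n)) (t1 t2 : ℕ) :
    U2 n R π t1 t2 = withinSum R (univ.filter fun i : Fin n => (i : ℕ) < t1 ∨ t2 ≤ (i : ℕ)) π := by
  simp [U2, withinSum, sum_filter, ite_and]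

variable {R : Fin n → Fin n → ℝ}

lemma pexp_withinSum (hdiag : ∀ i, R i i = 0) (S : Finset (Fin n)) :
    pexp n (withinSum R S) = coverProb n #S 2 * ∑ a, ∑ b, R a b := by
  simp only [funext (withinSum_eq_sum_coverInd R S), pexp_sum, pexp_const_mul, pexp_coverInd,
    mul_sum]
  refine sum_congr rfl fun a _ => sum_congr rfl fun b _ => ?_
  rcases eq_or_ne a b with rfl | hab
  · simp [hdiag]
  · rw [card_pair hab, mul_comm]

lemma pexp_withinSum_sq (hsym : ∀ i j, R i j = R j i) (hdiag : ∀ i, R i i = 0)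
    (S : Finset (Fin n)) :
    pexp n (fun π => withinSum R S π ^ 2)
      = coverProb n #S 4 * (∑ a, ∑ b, R a b) ^ 2
        + 4 * (coverProb n #S 3 - coverProb n #S 4) * ∑ a, (∑ b, R a b) ^ 2
        + 2 * (coverProb n #S 2 - 2 * coverProb n #S 3 + coverProb n #S 4)
          * ∑ a, ∑ b, R a b ^ 2 := by
  have hsq : ∀ π, withinSum R S π ^ 2
      = ∑ a, ∑ b, ∑ c, ∑ d, R a b * R c d * coverInd S ({a, b} ∪ {c, d}) π := by
    intro π
    rw [withinSum_eq_sum_coverInd, sq, sum_mul]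
    simp_rw [sum_mul, mul_sum, ← coverInd_mul]
    refine sum_congr rfl fun a _ => sum_congr rfl fun b _ => sum_congr rfl fun c _ =>
      sum_congr rfl fun d _ => by ring
  simp only [hsq, pexp_sum, pexp_const_mul, pexp_coverInd]
  rw [← sum_mul_pairOverlapWeight R hsym]
  refine sum_congr rfl fun a _ => sum_congr rfl fun b _ => sum_congr rfl fun c _ =>
    sum_congr rfl fun d _ => ?_
  rcases eq_or_ne a b with rfl | hab
  · simp [hdiag]
  rcases eq_or_ne c d with rfl | hcd
  · simp [hdiag]
  rw [apply_card_pair_union_pair (coverProb n #S) hab hcd]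

theorem pvar_withinSum (hn : 4 ≤ n) (hsym : ∀ i j, R i j = R j i) (hdiag : ∀ i, R i i = 0)
    (S : Finset (Fin n)) :
    pvar n (withinSum R S)
      = A n #S * (rdsq n R - r0 n R ^ 2) + B n #S * (r1sq n R - r0 n R ^ 2) := by
  rw [pvar_eq_pexp_sq_sub, pexp_withinSum_sq hsym hdiag, pexp_withinSum hdiag]
  have hn' : (4 : ℝ) ≤ n := by exact_mod_cast hn
  have h0 : (n : ℝ) ≠ 0 := by linarith
  have h1 : (n : ℝ) - 1 ≠ 0 := by linarith
  have h2 : (n : ℝ) - 2 ≠ 0 := by linarith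
  have h3 : (n : ℝ) - 3 ≠ 0 := by linarith
  simp only [coverProb, cast_descFactorial_eq_prod_range, prod_range_succ, prod_range_zero, A, B,
    rdsq, r0, r1sq, Rbar, ← sum_div, div_pow, Nat.cast_zero, Nat.cast_one, Nat.cast_ofNat,
    sub_zero, one_mul]
  field_simp
  ring

end RING

lemma card_filter_lt_or_le {n t1 t2 : ℕ} (h12 : t1 ≤ t2) (h2n : t2 ≤ n) :
    #(univ.filter fun i : Fin n => (i : ℕ) < t1 ∨ t2 ≤ (i : ℕ)) = n - t2 + t1 := by
  rw [card_filter, Fin.sum_univ_eq_sum_range (fun i => if i < t1 ∨ t2 ≤ i then 1 else 0),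
    ← card_filter]
  have hsplit : (range n).filter (fun i => i < t1 ∨ t2 ≤ i) = range t1 ∪ Ico t2 n := by
    ext i
    simp only [mem_filter, mem_range, mem_union, mem_Ico]
    omega
  rw [hsplit, card_union_of_disjoint, card_range, Nat.card_Ico]
  · omega
  · exact disjoint_left.2 fun i hi hi' => by simp at hi hi'; omega

/-- Under the permutation null distribution, for all integers `0 ≤ t1 < t2 ≤ n`,
`Var(U2^π(t1,t2)) = A(n − t2 + t1)(r_d² − r0²) + B(n − t2 + t1)(r1² − r0²)`. -/
theorem stmt3 (n : ℕ) (hn : 4 ≤ n) (R : Fin n → Fin n → ℝ)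
    (hsym : ∀ i j, R i j = R j i) (hdiag : ∀ i, R i i = 0)
    (t1 t2 : ℕ) (h12 : t1 < t2) (h2n : t2 ≤ n) :
    pvar n (fun π => U2 n R π t1 t2)
      = A n (n - t2 + t1) * (rdsq n R - (r0 n R) ^ 2)
        + B n (n - t2 + t1) * (r1sq n R - (r0 n R) ^ 2) := by
  simp only [U2_eq_withinSum]
  rw [pvar_withinSum hn hsym hdiag, card_filter_lt_or_le h12.le h2n]
end

section
/- Under the permutation null distribution, for all integers 0 ≤ t1 < t2 ≤ n, the covariance of U_w^π(t1,t2) and U_diff^π(t1,t2) equals 0. -/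
open Finset

open RING


namespace StmtAux

variable {n : ℕ}

lemma sum_comp_perm (τ : Equiv.Perm (Fin n)) (F : Equiv.Perm (Fin n) → ℝ) :
    ∑ π : Equiv.Perm (Fin n), F (π * τ) = ∑ π : Equiv.Perm (Fin n), F π :=
  Equiv.sum_comp (Equiv.mulRight τ) F

lemma pair_exists {i j i' j' : Fin n} (hij : i ≠ j) (hij' : i' ≠ j') :
    ∃ τ : Equiv.Perm (Fin n), τ i' = i ∧ τ j' = j := by
  refine ⟨(Equiv.swap j (Equiv.swap i i' j')) * (Equiv.swap i i'), ?_, ?_⟩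
  · have h1 : Equiv.swap i i' j' ≠ i := by
      intro h
      apply hij'
      have := congrArg (Equiv.swap i i') h
      simpa [Equiv.swap_apply_left] using this.symm
    simp only [Equiv.Perm.mul_apply, Equiv.swap_apply_right]
    exact Equiv.swap_apply_of_ne_of_ne hij (Ne.symm h1)
  · simp only [Equiv.Perm.mul_apply, Equiv.swap_apply_right]

lemma perm_single (i : Fin n) (F : Fin n → ℝ) :
    (n : ℝ) * ∑ π : Equiv.Perm (Fin n), F (π i) = (Nat.factorial n : ℝ) * ∑ a, F a := by
  have key : ∀ i' : Fin n, (∑ π : Equiv.Perm (Fin n), F (π i')) = ∑ π : Equiv.Perm (Fin n), F (π i) := by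
    intro i'
    have := sum_comp_perm (n := n) (Equiv.swap i i') (fun π => F (π i'))
    simp only [Equiv.Perm.mul_apply] at this
    rw [← this]
    refine Finset.sum_congr rfl fun π _ => ?_
    simp [Equiv.swap_apply_right]
  have h1 : ∑ i' : Fin n, ∑ π : Equiv.Perm (Fin n), F (π i')
      = (n : ℝ) * ∑ π : Equiv.Perm (Fin n), F (π i) := by
    rw [Finset.sum_congr rfl fun i' _ => key i']
    simp [Finset.card_univ, mul_comm]
  have h2 : ∑ i' : Fin n, ∑ π : Equiv.Perm (Fin n), F (π i')
      = (Nat.factorial n : ℝ) * ∑ a, F a := by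
    rw [Finset.sum_comm]
    have : ∀ π : Equiv.Perm (Fin n), ∑ i' : Fin n, F (π i') = ∑ a, F a := fun π =>
      Equiv.sum_comp π F
    rw [Finset.sum_congr rfl fun π _ => this π]
    simp [Finset.card_univ, Fintype.card_perm, mul_comm]
  rw [← h1, h2]

lemma perm_pair {i j : Fin n} (hij : i ≠ j) (F : Fin n → Fin n → ℝ) :
    (n : ℝ) * ((n : ℝ) - 1) * ∑ π : Equiv.Perm (Fin n), F (π i) (π j)
      = (Nat.factorial n : ℝ) * ((∑ a, ∑ b, F a b) - ∑ a, F a a) := by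
  have key : ∀ i' j' : Fin n, i' ≠ j' →
      (∑ π : Equiv.Perm (Fin n), F (π i') (π j'))
        = ∑ π : Equiv.Perm (Fin n), F (π i) (π j) := by
    intro i' j' hij'
    obtain ⟨τ, hτi, hτj⟩ := pair_exists hij hij'
    have := sum_comp_perm (n := n) τ (fun π => F (π i') (π j'))
    simp only [Equiv.Perm.mul_apply, hτi, hτj] at this
    exact this.symm
  have h2 : ∑ i' : Fin n, ∑ j' : Fin n, ∑ π : Equiv.Perm (Fin n), F (π i') (π j')
      = (Nat.factorial n : ℝ) * ∑ a, ∑ b, F a b := by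
    have step1 : ∀ i' : Fin n,
        (∑ j' : Fin n, ∑ π : Equiv.Perm (Fin n), F (π i') (π j'))
          = ∑ π : Equiv.Perm (Fin n), ∑ j' : Fin n, F (π i') (π j') :=
      fun i' => Finset.sum_comm
    rw [Finset.sum_congr rfl fun i' _ => step1 i', Finset.sum_comm]
    have step2 : ∀ π : Equiv.Perm (Fin n),
        (∑ i' : Fin n, ∑ j' : Fin n, F (π i') (π j')) = ∑ a, ∑ b, F a b := by
      intro π
      have hin : ∀ i' : Fin n, (∑ j' : Fin n, F (π i') (π j')) = ∑ b, F (π i') b :=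
        fun i' => Equiv.sum_comp π (F (π i'))
      rw [Finset.sum_congr rfl fun i' _ => hin i']
      exact Equiv.sum_comp π (fun a => ∑ b, F a b)
    rw [Finset.sum_congr rfl fun π _ => step2 π]
    simp [Finset.card_univ, Fintype.card_perm, mul_comm]
  have hdiag : ∑ i' : Fin n, ∑ π : Equiv.Perm (Fin n), F (π i') (π i')
      = (Nat.factorial n : ℝ) * ∑ a, F a a := by
    rw [Finset.sum_comm]
    have : ∀ π : Equiv.Perm (Fin n),
        (∑ i' : Fin n, F (π i') (π i')) = ∑ a, F a a :=
      fun π => Equiv.sum_comp π (fun a => F a a)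
    rw [Finset.sum_congr rfl fun π _ => this π]
    simp [Finset.card_univ, Fintype.card_perm, mul_comm]
  have h1 : ∑ i' : Fin n, ∑ j' : Fin n, ∑ π : Equiv.Perm (Fin n), F (π i') (π j')
      = (Nat.factorial n : ℝ) * (∑ a, F a a)
        + (n : ℝ) * ((n : ℝ) - 1) * ∑ π : Equiv.Perm (Fin n), F (π i) (π j) := by
    have inner : ∀ i' : Fin n,
        (∑ j' : Fin n, ∑ π : Equiv.Perm (Fin n), F (π i') (π j'))
          = (∑ π : Equiv.Perm (Fin n), F (π i') (π i'))
            + ((n : ℝ) - 1) * ∑ π : Equiv.Perm (Fin n), F (π i) (π j) := by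
      intro i'
      rw [← Finset.add_sum_erase _ _ (Finset.mem_univ i')]
      congr 1
      rw [Finset.sum_congr rfl fun j' hj' => key i' j' (Finset.ne_of_mem_erase hj').symm]
      rw [Finset.sum_const, Finset.card_erase_of_mem (Finset.mem_univ i'),
        Finset.card_univ, Fintype.card_fin, nsmul_eq_mul, Nat.cast_sub i.pos]
      norm_num
    rw [Finset.sum_congr rfl fun i' _ => inner i', Finset.sum_add_distrib, hdiag,
      Finset.sum_const, Finset.card_univ, Fintype.card_fin, nsmul_eq_mul]
    ring
  have := h2.symm.trans h1
  linarith [this]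

lemma perm_triple {i j k : Fin n} (hij : i ≠ j) (hki : k ≠ i) (hkj : k ≠ j)
    (F : Fin n → Fin n → ℝ) (g : Fin n → ℝ) :
    ((n : ℝ) - 2) * ∑ π : Equiv.Perm (Fin n), F (π i) (π j) * g (π k)
      = ∑ π : Equiv.Perm (Fin n), F (π i) (π j) * ((∑ a, g a) - g (π i) - g (π j)) := by
  have hn2 : 2 ≤ n := by
    have h1 : (i : ℕ) ≠ (j : ℕ) := fun h => hij (Fin.ext h)
    have := i.isLt; have := j.isLt; omega
  have key : ∀ k' : Fin n, k' ≠ i → k' ≠ j →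
      (∑ π : Equiv.Perm (Fin n), F (π i) (π j) * g (π k'))
        = ∑ π : Equiv.Perm (Fin n), F (π i) (π j) * g (π k) := by
    intro k' hk'i hk'j
    have := sum_comp_perm (n := n) (Equiv.swap k k') (fun π => F (π i) (π j) * g (π k'))
    simp only [Equiv.Perm.mul_apply] at this
    rw [← this]
    refine Finset.sum_congr rfl fun π _ => ?_
    rw [Equiv.swap_apply_of_ne_of_ne hki.symm (Ne.symm hk'i),
      Equiv.swap_apply_of_ne_of_ne hkj.symm (Ne.symm hk'j), Equiv.swap_apply_right]
  have hcard : ((univ.erase i).erase j).card = n - 2 := by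
    rw [Finset.card_erase_of_mem (Finset.mem_erase.mpr ⟨hij.symm, Finset.mem_univ j⟩),
      Finset.card_erase_of_mem (Finset.mem_univ i), Finset.card_univ, Fintype.card_fin]
    omega
  have hmain : ∑ k' ∈ (univ.erase i).erase j, ∑ π : Equiv.Perm (Fin n), F (π i) (π j) * g (π k')
      = ((n : ℝ) - 2) * ∑ π : Equiv.Perm (Fin n), F (π i) (π j) * g (π k) := by
    rw [Finset.sum_congr rfl fun k' hk' => key k'
        (Finset.ne_of_mem_erase (Finset.mem_of_mem_erase hk'))
        (Finset.ne_of_mem_erase hk'), Finset.sum_const, hcard, nsmul_eq_mul,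
      Nat.cast_sub hn2]
    norm_num
  rw [← hmain, Finset.sum_comm]
  refine Finset.sum_congr rfl fun π _ => ?_
  rw [← Finset.mul_sum]
  congr 1
  have h1 : ∑ k' ∈ (univ.erase i).erase j, g (π k')
      = (∑ k' : Fin n, g (π k')) - g (π i) - g (π j) := by
    rw [Finset.sum_erase_eq_sub (Finset.mem_erase.mpr ⟨hij.symm, Finset.mem_univ j⟩),
      Finset.sum_erase_eq_sub (Finset.mem_univ i)]
  rw [h1, Equiv.sum_comp π g]

lemma helper_pair (S : Finset (Fin n)) (w : Fin n → Fin n → ℝ) (z c : ℝ)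
    (hz : ∀ i ∈ S, w i i = z) (hc : ∀ i ∈ S, ∀ j ∈ S, i ≠ j → w i j = c) :
    ∑ i ∈ S, ∑ j ∈ S, w i j = (S.card : ℝ) * (z + ((S.card : ℝ) - 1) * c) := by
  have inner : ∀ i ∈ S, ∑ j ∈ S, w i j = z + ((S.card : ℝ) - 1) * c := by
    intro i hi
    rw [← Finset.add_sum_erase _ _ hi, hz i hi]
    congr 1
    rw [Finset.sum_congr rfl fun j hj => hc i hi j (Finset.mem_of_mem_erase hj)
      (Finset.ne_of_mem_erase hj).symm, Finset.sum_const,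
      Finset.card_erase_of_mem hi, nsmul_eq_mul,
      Nat.cast_sub (Finset.one_le_card.mpr ⟨i, hi⟩)]
    norm_num
  rw [Finset.sum_congr rfl inner, Finset.sum_const, nsmul_eq_mul]

lemma helper_triple (S : Finset (Fin n)) (y : Fin n → Fin n → Fin n → ℝ)
    (cA cB cC : ℝ)
    (h0 : ∀ i ∈ S, ∀ k ∈ S, y i i k = 0)
    (h1 : ∀ i ∈ S, ∀ j ∈ S, i ≠ j → y i j i = cA)
    (h2 : ∀ i ∈ S, ∀ j ∈ S, i ≠ j → y i j j = cB)
    (h3 : ∀ i ∈ S, ∀ j ∈ S, ∀ k ∈ S, i ≠ j → k ≠ i → k ≠ j → y i j k = cC) :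
    ∑ i ∈ S, ∑ j ∈ S, ∑ k ∈ S, y i j k
      = (S.card : ℝ) * ((S.card : ℝ) - 1) * (cA + cB + ((S.card : ℝ) - 2) * cC) := by
  have key : ∑ i ∈ S, ∑ j ∈ S, ∑ k ∈ S, y i j k
      = (S.card : ℝ) * (0 + ((S.card : ℝ) - 1) * (cA + cB + ((S.card : ℝ) - 2) * cC)) := by
    apply helper_pair S (fun i j => ∑ k ∈ S, y i j k)
    · intro i hi
      rw [Finset.sum_congr rfl fun k hk => h0 i hi k hk, Finset.sum_const, smul_zero]
    · intro i hi j hj hij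
      have hjmem : j ∈ S.erase i := Finset.mem_erase.mpr ⟨hij.symm, hj⟩
      rw [← Finset.add_sum_erase S (fun k => y i j k) hi,
        ← Finset.add_sum_erase (S.erase i) (fun k => y i j k) hjmem,
        h1 i hi j hj hij, h2 i hi j hj hij]
      have hrest : ∑ k ∈ (S.erase i).erase j, y i j k = ((S.card : ℝ) - 2) * cC := by
        have hcongr : ∀ k ∈ (S.erase i).erase j, y i j k = cC := by
          intro k hk
          have hk1 := Finset.mem_of_mem_erase hk
          exact h3 i hi j hj k (Finset.mem_of_mem_erase hk1) hij
            (Finset.ne_of_mem_erase hk1) (Finset.ne_of_mem_erase hk)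
        rw [Finset.sum_congr rfl hcongr, Finset.sum_const, nsmul_eq_mul,
          Finset.card_erase_of_mem hjmem, Finset.card_erase_of_mem hi]
        have h2le : 2 ≤ S.card := by
          have := Finset.one_lt_card.mpr ⟨i, hi, j, hj, hij⟩
          omega
        rw [show S.card - 1 - 1 = S.card - 2 from by omega, Nat.cast_sub h2le]
        norm_num
      rw [hrest]
      ring
  rw [key]
  ring

end StmtAux

namespace StmtAux
open RING

variable {n : ℕ}

lemma factorial_ne : ((Nat.factorial n : ℝ)) ≠ 0 := by
  exact_mod_cast Nat.factorial_ne_zero n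

lemma pexp_val (f : Equiv.Perm (Fin n) → ℝ) :
    pexp n f = (∑ π : Equiv.Perm (Fin n), f π) / (Nat.factorial n : ℝ) := rfl

lemma pexp_const (c : ℝ) : pexp n (fun _ => c) = c := by
  simp [pexp, Finset.card_univ, Fintype.card_perm, Fintype.card_fin, mul_comm]
  rw [mul_div_assoc, div_self factorial_ne, mul_one]

lemma pexp_add (f g : Equiv.Perm (Fin n) → ℝ) :
    pexp n (fun π => f π + g π) = pexp n f + pexp n g := by
  simp [pexp, Finset.sum_add_distrib, add_div]

lemma pexp_const_mul (c : ℝ) (f : Equiv.Perm (Fin n) → ℝ) :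
    pexp n (fun π => c * f π) = c * pexp n f := by
  simp [pexp, ← Finset.mul_sum, mul_div_assoc]

lemma pcov_eq (f g : Equiv.Perm (Fin n) → ℝ) :
    pcov n f g = pexp n (fun π => f π * g π) - pexp n f * pexp n g := by
  have h : ∀ π, (f π - pexp n f) * (g π - pexp n g)
      = f π * g π + (-(pexp n g)) * f π + (-(pexp n f)) * g π + pexp n f * pexp n g := by
    intro π; ring
  calc pcov n f g
      = pexp n (fun π => f π * g π + (-(pexp n g)) * f π + (-(pexp n f)) * g π
          + pexp n f * pexp n g) := by
        unfold pcov
        exact congrArg (pexp n) (funext h)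
    _ = pexp n (fun π => f π * g π) + (-(pexp n g)) * pexp n f
          + (-(pexp n f)) * pexp n g + pexp n f * pexp n g := by
        rw [pexp_add, pexp_add, pexp_add, pexp_const, pexp_const_mul, pexp_const_mul]
    _ = pexp n (fun π => f π * g π) - pexp n f * pexp n g := by ring

lemma pcov_combo (F G : Equiv.Perm (Fin n) → ℝ) (a b c d e : ℝ) :
    pcov n (fun π => a * F π + b * G π + c) (fun π => d * G π + e)
      = a * d * pcov n F G + b * d * pcov n G G := by
  have h : (fun π => (a * F π + b * G π + c) * (d * G π + e))
      = fun π => a * d * (F π * G π) + b * d * (G π * G π) + a * e * F π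
          + (b * e + c * d) * G π + c * e := by
    funext π; ring
  rw [pcov_eq, pcov_eq, pcov_eq, h, pexp_add, pexp_add, pexp_add, pexp_add,
    pexp_const, pexp_const_mul, pexp_const_mul, pexp_const_mul, pexp_const_mul]
  have h2 : pexp n (fun π => a * F π + b * G π + c)
      = a * pexp n F + b * pexp n G + c := by
    rw [show (fun π => a * F π + b * G π + c) = fun π => (a * F π + b * G π) + c from rfl,
      pexp_add, pexp_add, pexp_const, pexp_const_mul, pexp_const_mul]
  have h3 : pexp n (fun π => d * G π + e) = d * pexp n G + e := by
    rw [pexp_add, pexp_const, pexp_const_mul]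
  rw [h2, h3]; ring

end StmtAux

open StmtAux in
/-- Under the permutation null distribution, for all integers `0 ≤ t1 < t2 ≤ n`,
`Cov(U_w^π(t1,t2), U_diff^π(t1,t2)) = 0`. -/
theorem stmt7 (n : ℕ) (hn : 4 ≤ n) (R : Fin n → Fin n → ℝ)
    (hsym : ∀ i j, R i j = R j i) (hdiag : ∀ i, R i i = 0)
    (t1 t2 : ℕ) (h12 : t1 < t2) (h2n : t2 ≤ n) :
    pcov n (fun π => Uw n R π t1 t2) (fun π => Udiff n R π t1 t2) = 0 := by
  classical
  have hn4 : (4 : ℝ) ≤ (n : ℝ) := by exact_mod_cast hn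
  have hn0 : (n : ℝ) ≠ 0 := by linarith
  have hn1 : (n : ℝ) - 1 ≠ 0 := by intro h; linarith
  have hn2 : (n : ℝ) - 2 ≠ 0 := by intro h; linarith
  set N : ℝ := (Nat.factorial n : ℝ) with hN
  have hNne : N ≠ 0 := factorial_ne
  set S : Finset (Fin n) := univ.filter (fun i => t1 ≤ (i : ℕ) ∧ (i : ℕ) < t2) with hS
  set g : Fin n → ℝ := fun a => ∑ b, R a b with hg
  set T : ℝ := ∑ a, g a with hT
  set M2 : ℝ := ∑ a, g a * g a with hM2
  set Ff : Equiv.Perm (Fin n) → ℝ := fun π => ∑ i ∈ S, ∑ j ∈ S, R (π i) (π j) with hFf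
  set Df : Equiv.Perm (Fin n) → ℝ := fun π => ∑ i ∈ S, g (π i) with hDf
  set pr : ℝ := (S.card : ℝ) with hpr
  -- cardinality of S
  have hcard : S.card = t2 - t1 := by
    rw [hS]
    rw [show (univ.filter (fun i : Fin n => t1 ≤ (i : ℕ) ∧ (i : ℕ) < t2)).card
        = (Finset.Ico t1 t2).card from ?_, Nat.card_Ico]
    apply Finset.card_bij (fun (i : Fin n) _ => (i : ℕ))
    · intro i hi
      simp only [Finset.mem_filter, Finset.mem_univ, true_and] at hi
      simp [Finset.mem_Ico, hi.1, hi.2]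
    · intro a ha b hb hab
      exact Fin.ext hab
    · intro a ha
      simp only [Finset.mem_Ico] at ha
      exact ⟨⟨a, lt_of_lt_of_le ha.2 h2n⟩, by simp [Finset.mem_filter, ha.1, ha.2], rfl⟩
  have hprval : pr = (t2 : ℝ) - (t1 : ℝ) := by
    rw [hpr, hcard, Nat.cast_sub h12.le]
  -- structural identities
  have hU1 : ∀ π : Equiv.Perm (Fin n), U1 n R π t1 t2 = Ff π := by
    intro π
    rw [hFf]
    simp only [U1, hS, Finset.sum_filter]
    refine Finset.sum_congr rfl fun i _ => ?_
    by_cases hi : t1 ≤ (i : ℕ) ∧ (i : ℕ) < t2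
    · rw [if_pos hi]
      refine Finset.sum_congr rfl fun j _ => ?_
      by_cases hj : t1 ≤ (j : ℕ) ∧ (j : ℕ) < t2
      · rw [if_pos hj, if_pos ⟨hi.1, hi.2, hj.1, hj.2⟩]
      · rw [if_neg hj, if_neg (by tauto)]
    · rw [if_neg hi]
      apply Finset.sum_eq_zero
      intro j _
      rw [if_neg (by tauto)]
  have hUdiff : ∀ π : Equiv.Perm (Fin n), Udiff n R π t1 t2 = 2 * Df π - T := by
    intro π
    set Sc : Finset (Fin n) := univ.filter (fun i => ¬(t1 ≤ (i : ℕ) ∧ (i : ℕ) < t2)) with hSc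
    have hU2s : U2 n R π t1 t2 = ∑ i ∈ Sc, ∑ j ∈ Sc, R (π i) (π j) := by
      simp only [U2, hSc, Finset.sum_filter]
      refine Finset.sum_congr rfl fun i _ => ?_
      by_cases hi : ¬(t1 ≤ (i : ℕ) ∧ (i : ℕ) < t2)
      · rw [if_pos hi]
        refine Finset.sum_congr rfl fun j _ => ?_
        by_cases hj : ¬(t1 ≤ (j : ℕ) ∧ (j : ℕ) < t2)
        · rw [if_pos hj, if_pos (by omega)]
        · rw [if_neg hj, if_neg (by omega)]
      · rw [if_neg hi]
        apply Finset.sum_eq_zero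
        intro j _
        rw [if_neg (by omega)]
    have hgsplit : ∀ i : Fin n, g (π i)
        = (∑ j ∈ S, R (π i) (π j)) + ∑ j ∈ Sc, R (π i) (π j) := by
      intro i
      rw [hS, hSc, Finset.sum_filter_add_sum_filter_not univ _ (fun j => R (π i) (π j))]
      exact (Equiv.sum_comp π (R (π i))).symm
    have e1 : Df π = Ff π + ∑ i ∈ S, ∑ j ∈ Sc, R (π i) (π j) := by
      rw [hDf, hFf]
      simp only
      rw [Finset.sum_congr rfl fun i _ => hgsplit i, Finset.sum_add_distrib]
    have e2 : ∑ i ∈ Sc, g (π i)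
        = (∑ i ∈ Sc, ∑ j ∈ S, R (π i) (π j)) + ∑ i ∈ Sc, ∑ j ∈ Sc, R (π i) (π j) := by
      rw [Finset.sum_congr rfl fun i _ => hgsplit i, Finset.sum_add_distrib]
    have e3 : T = Df π + ∑ i ∈ Sc, g (π i) := by
      rw [hT, hDf]
      simp only
      rw [← Equiv.sum_comp π g, ← Finset.sum_filter_add_sum_filter_not univ
        (fun i : Fin n => t1 ≤ (i : ℕ) ∧ (i : ℕ) < t2) (fun i => g (π i))]
    have e4 : ∑ i ∈ S, ∑ j ∈ Sc, R (π i) (π j)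
        = ∑ i ∈ Sc, ∑ j ∈ S, R (π i) (π j) := by
      rw [Finset.sum_comm]
      exact Finset.sum_congr rfl fun i _ => Finset.sum_congr rfl fun j _ => hsym (π j) (π i)
    simp only [Udiff, hU1 π, hU2s]
    linarith [e1, e2, e3, e4]
  have hU2 : ∀ π : Equiv.Perm (Fin n), U2 n R π t1 t2 = Ff π - (2 * Df π - T) := by
    intro π
    have h := hUdiff π
    simp only [Udiff, hU1 π] at h
    linarith
  -- moment computations
  -- scalar sublemmas
  have hTsum : ∑ a : Fin n, ∑ b : Fin n, R a b = T := by
    rw [hT]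
  have hdiagsum : ∑ a : Fin n, R a a = 0 :=
    Finset.sum_eq_zero fun a _ => hdiag a
  have hM2a : ∑ a : Fin n, ∑ b : Fin n, R a b * g a = M2 := by
    rw [hM2]
    refine Finset.sum_congr rfl fun a _ => ?_
    rw [← Finset.sum_mul]
  have hM2b : ∑ a : Fin n, ∑ b : Fin n, R a b * g b = M2 := by
    rw [Finset.sum_comm, hM2]
    refine Finset.sum_congr rfl fun b _ => ?_
    rw [← Finset.sum_mul]
    congr 1
    rw [hg]
    exact Finset.sum_congr rfl fun a _ => hsym a b
  have hdiagA : ∑ a : Fin n, R a a * g a = 0 :=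
    Finset.sum_eq_zero fun a _ => by rw [hdiag a, zero_mul]
  have hggT : ∑ a : Fin n, ∑ b : Fin n, g a * g b = T * T := by
    rw [← Finset.sum_mul_sum, ← hT]
  have hTT : ∑ a : Fin n, ∑ b : Fin n, R a b * (T - g a - g b) = T * T - 2 * M2 := by
    have expand : ∀ a b : Fin n, R a b * (T - g a - g b)
        = R a b * T - R a b * g a - R a b * g b := fun a b => by ring
    calc ∑ a : Fin n, ∑ b : Fin n, R a b * (T - g a - g b)
        = ∑ a : Fin n, ∑ b : Fin n, (R a b * T - R a b * g a - R a b * g b) := by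
          exact Finset.sum_congr rfl fun a _ => Finset.sum_congr rfl fun b _ => expand a b
      _ = (∑ a : Fin n, ∑ b : Fin n, R a b * T) - (∑ a : Fin n, ∑ b : Fin n, R a b * g a)
            - ∑ a : Fin n, ∑ b : Fin n, R a b * g b := by
          simp [Finset.sum_sub_distrib]
      _ = T * T - M2 - M2 := by
          rw [hM2a, hM2b]
          congr 1
          congr 1
          simp only [← Finset.sum_mul, hTsum]
      _ = T * T - 2 * M2 := by ring
  have hdiagC : ∑ a : Fin n, R a a * (T - g a - g a) = 0 :=
    Finset.sum_eq_zero fun a _ => by rw [hdiag a, zero_mul]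
  -- now the moments
  have hSD : ∑ π : Equiv.Perm (Fin n), Df π = pr * (N * T / n) := by
    rw [hDf]
    simp only
    rw [Finset.sum_comm]
    have hone : ∀ i : Fin n, ∑ π : Equiv.Perm (Fin n), g (π i) = N * T / n := by
      intro i
      have h := perm_single i g
      rw [← hT, ← hN] at h
      rw [eq_div_iff hn0]
      linear_combination h
    rw [Finset.sum_congr rfl fun i _ => hone i, Finset.sum_const, nsmul_eq_mul, ← hpr]
  have hSU : ∑ π : Equiv.Perm (Fin n), Ff π
      = pr * (0 + (pr - 1) * (N * T / ((n : ℝ) * ((n : ℝ) - 1)))) := by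
    rw [hFf]
    simp only
    rw [Finset.sum_comm]
    rw [Finset.sum_congr rfl fun i _ => Finset.sum_comm]
    rw [hpr]
    apply helper_pair S (fun i j => ∑ π : Equiv.Perm (Fin n), R (π i) (π j))
    · intro i _
      exact Finset.sum_eq_zero fun π _ => hdiag (π i)
    · intro i _ j _ hij
      have h := perm_pair hij R
      rw [hTsum, hdiagsum, ← hN] at h
      rw [eq_div_iff (by exact mul_ne_zero hn0 hn1)]
      linear_combination h
  have hSDD : ∑ π : Equiv.Perm (Fin n), Df π * Df π
      = pr * (N * M2 / n + (pr - 1) * (N * (T * T - M2) / ((n : ℝ) * ((n : ℝ) - 1)))) := by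
    have hexp : ∀ π : Equiv.Perm (Fin n), Df π * Df π
        = ∑ i ∈ S, ∑ j ∈ S, g (π i) * g (π j) := by
      intro π
      rw [hDf]
      simp only
      rw [Finset.sum_mul_sum]
    rw [Finset.sum_congr rfl fun π _ => hexp π, Finset.sum_comm]
    rw [Finset.sum_congr rfl fun i _ => Finset.sum_comm]
    rw [hpr]
    apply helper_pair S (fun i j => ∑ π : Equiv.Perm (Fin n), g (π i) * g (π j))
    · intro i _
      have h := perm_single i (fun a => g a * g a)
      rw [← hM2, ← hN] at h
      rw [eq_div_iff hn0]
      linear_combination h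
    · intro i _ j _ hij
      have h := perm_pair hij (fun a b => g a * g b)
      rw [hggT, ← hM2, ← hN] at h
      rw [eq_div_iff (by exact mul_ne_zero hn0 hn1)]
      linear_combination h
  have hSUD : ∑ π : Equiv.Perm (Fin n), Ff π * Df π
      = pr * (pr - 1) * (N * M2 / ((n : ℝ) * ((n : ℝ) - 1))
          + N * M2 / ((n : ℝ) * ((n : ℝ) - 1))
          + (pr - 2) * (N * (T * T - 2 * M2) / ((n : ℝ) * ((n : ℝ) - 1) * ((n : ℝ) - 2)))) := by
    have hexp : ∀ π : Equiv.Perm (Fin n), Ff π * Df π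
        = ∑ i ∈ S, ∑ j ∈ S, ∑ k ∈ S, R (π i) (π j) * g (π k) := by
      intro π
      rw [hFf, hDf]
      simp only
      rw [Finset.sum_mul]
      refine Finset.sum_congr rfl fun i _ => ?_
      rw [Finset.sum_mul_sum]
    rw [Finset.sum_congr rfl fun π _ => hexp π, Finset.sum_comm]
    rw [Finset.sum_congr rfl fun i _ => Finset.sum_comm]
    rw [Finset.sum_congr rfl fun i _ => Finset.sum_congr rfl fun j _ =>
      Finset.sum_comm]
    rw [hpr]
    apply helper_triple S
      (fun i j k => ∑ π : Equiv.Perm (Fin n), R (π i) (π j) * g (π k))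
    · intro i _ k _
      exact Finset.sum_eq_zero fun π _ => by rw [hdiag (π i), zero_mul]
    · intro i _ j _ hij
      have h := perm_pair hij (fun a b => R a b * g a)
      rw [hM2a, hdiagA, ← hN] at h
      rw [eq_div_iff (by exact mul_ne_zero hn0 hn1)]
      linear_combination h
    · intro i _ j _ hij
      have h := perm_pair hij (fun a b => R a b * g b)
      rw [hM2b, ← hN] at h
      simp only [hdiag, zero_mul, Finset.sum_const_zero, sub_zero] at h
      rw [eq_div_iff (by exact mul_ne_zero hn0 hn1)]
      linear_combination h
    · intro i _ j _ k _ hij hki hkj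
      have h3 := perm_triple hij hki hkj R g
      rw [← hT] at h3
      have h := perm_pair hij (fun a b => R a b * (T - g a - g b))
      rw [hTT, hdiagC, ← hN] at h
      rw [← h3] at h
      rw [eq_div_iff (by exact mul_ne_zero (mul_ne_zero hn0 hn1) hn2)]
      linear_combination h
  -- rewrite the two statistics as affine combinations of Ff and Df
  have hUwfun : (fun π => Uw n R π t1 t2)
      = fun π => 1 * Ff π + (-(2 * (pr - 1) / ((n : ℝ) - 2))) * Df π
          + (pr - 1) * T / ((n : ℝ) - 2) := by
    funext π
    rw [Uw, hU1 π, hU2 π, hprval]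
    field_simp
    ring
  have hUdfun : (fun π => Udiff n R π t1 t2) = fun π => 2 * Df π + (-T) := by
    funext π
    rw [hUdiff π]
    ring
  rw [hUwfun, hUdfun, pcov_combo]
  rw [pcov_eq, pcov_eq]
  simp only [pexp_val, ← hN]
  rw [hSD, hSU, hSDD, hSUD]
  field_simp
  ring
end

section
/- For all integers 0 ≤ t1 < t2 ≤ n, if Var(U_w(t1,t2)) > 0 and Var(U_diff(t1,t2)) > 0 under the permutation null distribution, then the 2×2 covariance matrix Σ(t1,t2) of (U1^π(t1,t2), U2^π(t1,t2)) is invertible and, for every permutation π of {1,…,n}, the Mahalanobis-type statistic decomposes as T_R^π(t1,t2) = Z_w^π(t1,t2)² + Z_diff^π(t1,t2)². -/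
open Finset

open RING

/-!
Write `r a = ∑ b, R a b`, `S = ∑ a, r a`, and `L π = ∑_{i ∈ B} r (π i)` for the block
`B = (t1, t2]`. Removing from `R` its additive part `(r a + r b) / (n - 2)` and a constant leaves
the Hoeffding kernel `K`, with zero diagonal and zero row and column sums, and
`U1 = ∑_{B × B} K (π i) (π j) + 2 β L + const` with `β = (|B| - 1) / (n - 2)`, while symmetry of
`R` gives `U2 = U1 - 2 L + S`. Hence `U_w` is the degenerate part `∑_{B × B} K (π i) (π j)` up to a
constant and `U_diff = 2 L - S` is linear. The degenerate part is uncorrelated with every linear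
statistic `∑_k g (π k)`: after relabelling, `𝔼 K (π i) (π j) g (π k)` does not depend on a free
index, and summing over that index gives zero. So `U_w` and `U_diff` are uncorrelated, and since
`U1 = U_w + β U_diff` and `U2 = U_w + (β - 1) U_diff` is an invertible change of coordinates, the
Mahalanobis form of `(U1, U2)` equals that of `(U_w, U_diff)`, whose covariance matrix is diagonal.
-/

open Matrix in
theorem Matrix.dotProduct_inv_conj_mulVec {ι α : Type*} [Fintype ι] [DecidableEq ι] [CommRing α]
    (M D : Matrix ι ι α) (hM : IsUnit M.det) (w : ι → α) :
    M *ᵥ w ⬝ᵥ (M * D * Mᵀ)⁻¹ *ᵥ M *ᵥ w = w ⬝ᵥ D⁻¹ *ᵥ w := by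
  have hMt : IsUnit Mᵀ.det := by rwa [det_transpose]
  rw [mul_inv_rev, mul_inv_rev, mulVec_mulVec, Matrix.mul_assoc, Matrix.mul_assoc,
    nonsing_inv_mul M hM, Matrix.mul_one, dotProduct_mulVec, ← vecMul_transpose,
    vecMul_vecMul, ← Matrix.mul_assoc, Matrix.mul_nonsing_inv _ hMt, Matrix.one_mul,
    ← dotProduct_mulVec]

namespace RING

section Finset

lemma sum_ite_eq_zero_of_mem {ι : Type*} [DecidableEq ι] (s : Finset ι) (f : ι → ℝ) {i : ι}
    (hi : i ∈ s) : ∑ j ∈ s, (if i = j then 0 else f j) = ∑ j ∈ s, f j - f i := by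
  rw [← sum_ite_eq_of_mem s i f hi, ← sum_sub_distrib]
  exact sum_congr rfl fun j _ => by split_ifs <;> ring

lemma sum_sum_ite_eq_zero_add_add {ι : Type*} [DecidableEq ι] (s : Finset ι) (u : ι → ℝ) (c : ℝ) :
    ∑ i ∈ s, ∑ j ∈ s, (if i = j then 0 else u i + u j + c)
      = 2 * ((s.card : ℝ) - 1) * ∑ i ∈ s, u i + s.card * ((s.card : ℝ) - 1) * c := by
  rw [sum_congr rfl fun i hi => sum_ite_eq_zero_of_mem s (fun j => u i + u j + c) hi]
  simp only [sum_add_distrib, sum_sub_distrib, sum_const, nsmul_eq_mul, ← mul_sum]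
  ring

lemma eq_zero_of_sum_eq_zero_of_forall_notMem_eq {ι : Type*} [Fintype ι] [DecidableEq ι]
    {Φ : ι → ℝ} {T : Finset ι} {k : ι} (hk : k ∉ T) (hΦ : ∀ k' ∉ T, Φ k' = Φ k)
    (hT : ∀ t ∈ T, Φ t = 0) (hsum : ∑ k', Φ k' = 0) : Φ k = 0 := by
  rw [← sum_add_sum_compl T, sum_eq_zero hT, zero_add,
    sum_congr rfl fun k' hk' => hΦ k' (mem_compl.1 hk'), sum_const, nsmul_eq_mul] at hsum
  have hcard : (Tᶜ.card : ℝ) ≠ 0 := Nat.cast_ne_zero.2 (card_ne_zero.2 ⟨k, mem_compl.2 hk⟩)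
  exact (mul_eq_zero.1 hsum).resolve_left hcard

end Finset

variable {n : ℕ}

section PermutationNull

lemma pvar_eq_pcov (f : Equiv.Perm (Fin n) → ℝ) : pvar n f = pcov n f f := by
  simp only [pvar, pcov, sq]

lemma pcov_of_pexp_eq_zero {f : Equiv.Perm (Fin n) → ℝ} (hf : pexp n f = 0)
    (g : Equiv.Perm (Fin n) → ℝ) : pcov n f g = pexp n (fun π => f π * g π) := by
  have h : ∀ π, (f π - pexp n f) * (g π - pexp n g) = f π * g π + -pexp n g * f π := by
    intro π
    rw [hf]
    ring
  rw [pcov, funext h, pexp_add, pexp_const_mul, hf, mul_zero, add_zero]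

variable {F G X Z : Equiv.Perm (Fin n) → ℝ} {p q c r s d : ℝ}

lemma sub_pexp_eq_of_affine (hF : ∀ π, F π = p * X π + q * Z π + c) (π : Equiv.Perm (Fin n)) :
    F π - pexp n F = p * (X π - pexp n X) + q * (Z π - pexp n Z) := by
  have hmean : pexp n F = p * pexp n X + q * pexp n Z + c := by
    rw [funext hF, pexp_add, pexp_add, pexp_const_mul, pexp_const_mul, pexp_const]
  rw [hF, hmean]
  ring

lemma pcov_eq_of_affine (hF : ∀ π, F π = p * X π + q * Z π + c)
    (hG : ∀ π, G π = r * X π + s * Z π + d) :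
    pcov n F G = p * r * pvar n X + (p * s + q * r) * pcov n X Z + q * s * pvar n Z := by
  have hprod : ∀ π, (F π - pexp n F) * (G π - pexp n G)
      = p * r * (X π - pexp n X) ^ 2
        + (p * s + q * r) * ((X π - pexp n X) * (Z π - pexp n Z))
        + q * s * (Z π - pexp n Z) ^ 2 := by
    intro π
    rw [sub_pexp_eq_of_affine hF, sub_pexp_eq_of_affine hG]
    ring
  rw [pcov, funext hprod, pexp_add, pexp_add, pexp_const_mul, pexp_const_mul, pexp_const_mul,
    pvar, pvar, pcov]

end PermutationNull

section Mahalanobis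

open Matrix

noncomputable def pcovMatrix (n : ℕ) (F G : Equiv.Perm (Fin n) → ℝ) : Matrix (Fin 2) (Fin 2) ℝ :=
  !![pvar n F, pcov n F G; pcov n F G, pvar n G]

variable {F G X Z : Equiv.Perm (Fin n) → ℝ} {p q c r s d : ℝ}

lemma pcovMatrix_eq_conj_diagonal (hF : ∀ π, F π = p * X π + q * Z π + c)
    (hG : ∀ π, G π = r * X π + s * Z π + d) (hXZ : pcov n X Z = 0) :
    pcovMatrix n F G = !![p, q; r, s] * diagonal ![pvar n X, pvar n Z] * !![p, q; r, s]ᵀ := by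
  rw [pcovMatrix, pvar_eq_pcov F, pvar_eq_pcov G, pcov_eq_of_affine hF hF,
    pcov_eq_of_affine hF hG, pcov_eq_of_affine hG hG, hXZ]
  ext i j
  fin_cases i <;> fin_cases j <;> simp [Matrix.mul_apply, Fin.sum_univ_two, vecMul_diagonal] <;> ring

lemma isUnit_pcovMatrix (hF : ∀ π, F π = p * X π + q * Z π + c)
    (hG : ∀ π, G π = r * X π + s * Z π + d) (hdet : p * s - q * r ≠ 0) (hXZ : pcov n X Z = 0)
    (hX : pvar n X ≠ 0) (hZ : pvar n Z ≠ 0) : IsUnit (pcovMatrix n F G) := by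
  rw [pcovMatrix_eq_conj_diagonal hF hG hXZ, isUnit_iff_isUnit_det, det_mul, det_mul,
    det_transpose, det_diagonal, det_fin_two_of, isUnit_iff_ne_zero]
  simp [Fin.prod_univ_two, hdet, hX, hZ]

lemma dotProduct_inv_pcovMatrix_mulVec (hF : ∀ π, F π = p * X π + q * Z π + c)
    (hG : ∀ π, G π = r * X π + s * Z π + d) (hdet : p * s - q * r ≠ 0) (hXZ : pcov n X Z = 0)
    (hX : pvar n X ≠ 0) (hZ : pvar n Z ≠ 0) (π : Equiv.Perm (Fin n)) :
    ![F π - pexp n F, G π - pexp n G] ⬝ᵥ (pcovMatrix n F G)⁻¹ *ᵥ ![F π - pexp n F, G π - pexp n G]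
      = (X π - pexp n X) ^ 2 / pvar n X + (Z π - pexp n Z) ^ 2 / pvar n Z := by
  have hv : ![F π - pexp n F, G π - pexp n G]
      = !![p, q; r, s] *ᵥ ![X π - pexp n X, Z π - pexp n Z] := by
    rw [sub_pexp_eq_of_affine hF, sub_pexp_eq_of_affine hG]
    ext i
    fin_cases i <;> simp [mulVec, dotProduct, Fin.sum_univ_two]
  have hinv : (diagonal ![pvar n X, pvar n Z])⁻¹ = diagonal ![(pvar n X)⁻¹, (pvar n Z)⁻¹] := by
    refine inv_eq_left_inv ?_
    rw [diagonal_mul_diagonal, ← diagonal_one]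
    congr 1
    ext i
    fin_cases i <;> simp [hX, hZ]
  rw [hv, pcovMatrix_eq_conj_diagonal hF hG hXZ, dotProduct_inv_conj_mulVec _ _ (by
    rw [det_fin_two_of, isUnit_iff_ne_zero]; exact hdet), hinv]
  simp [dotProduct, Fin.sum_univ_two, mulVec_diagonal]
  ring

end Mahalanobis

section PermutationSums

lemma sum_perm_apply_eq_of_ne (F : Fin n → Fin n → Fin n → ℝ) {i j k k' : Fin n}
    (hki : k ≠ i) (hkj : k ≠ j) (hk'i : k' ≠ i) (hk'j : k' ≠ j) :
    ∑ π : Equiv.Perm (Fin n), F (π i) (π j) (π k)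
      = ∑ π : Equiv.Perm (Fin n), F (π i) (π j) (π k') := by
  rw [← Equiv.sum_comp (Equiv.mulRight (Equiv.swap k k'))]
  refine sum_congr rfl fun π _ => ?_
  simp [Equiv.swap_apply_of_ne_of_ne hki.symm hk'i.symm,
    Equiv.swap_apply_of_ne_of_ne hkj.symm hk'j.symm]

variable {K : Fin n → Fin n → ℝ}

lemma sum_perm_mul_apply_left_eq_zero (hrow : ∀ a, ∑ b, K a b = 0) (hdiag : ∀ a, K a a = 0)
    (g : Fin n → ℝ) (i j : Fin n) : ∑ π : Equiv.Perm (Fin n), K (π i) (π j) * g (π i) = 0 := by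
  by_cases hji : j = i
  · simp [hji, hdiag]
  refine eq_zero_of_sum_eq_zero_of_forall_notMem_eq (Φ := fun j => ∑ π : Equiv.Perm (Fin n),
    K (π i) (π j) * g (π i)) (T := {i}) (by simpa using hji) (fun j' hj' => ?_) ?_ ?_
  · exact sum_perm_apply_eq_of_ne (fun a _ c => K a c * g a) (by simpa using hj')
      (by simpa using hj') hji hji
  · simp [hdiag]
  · rw [sum_comm]
    refine sum_eq_zero fun π _ => ?_
    rw [← sum_mul, Equiv.sum_comp π (K (π i)), hrow, zero_mul]

lemma sum_perm_mul_apply_eq_zero (hrow : ∀ a, ∑ b, K a b = 0) (hcol : ∀ b, ∑ a, K a b = 0)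
    (hdiag : ∀ a, K a a = 0) (g : Fin n → ℝ) (i j k : Fin n) :
    ∑ π : Equiv.Perm (Fin n), K (π i) (π j) * g (π k) = 0 := by
  have hleft : ∀ g : Fin n → ℝ, ∑ π : Equiv.Perm (Fin n), K (π i) (π j) * g (π i) = 0 :=
    fun g => sum_perm_mul_apply_left_eq_zero hrow hdiag g i j
  have hright : ∀ g : Fin n → ℝ, ∑ π : Equiv.Perm (Fin n), K (π i) (π j) * g (π j) = 0 :=
    fun g => sum_perm_mul_apply_left_eq_zero (K := fun a b => K b a) hcol hdiag g j i
  by_cases hij : i = j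
  · simp [hij, hdiag]
  by_cases hki : k = i
  · rw [hki, hleft]
  by_cases hkj : k = j
  · rw [hkj, hright]
  refine eq_zero_of_sum_eq_zero_of_forall_notMem_eq (Φ := fun k => ∑ π : Equiv.Perm (Fin n),
    K (π i) (π j) * g (π k)) (T := {i, j}) (by simp [hki, hkj]) (fun k' hk' => ?_) ?_ ?_
  · simp only [mem_insert, mem_singleton, not_or] at hk'
    exact sum_perm_apply_eq_of_ne (fun a b c => K a b * g c) hk'.1 hk'.2 hki hkj
  · simp [hleft, hright]
  · have hK : ∑ π : Equiv.Perm (Fin n), K (π i) (π j) = 0 := by simpa using hleft 1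
    rw [sum_comm]
    simp_rw [← mul_sum, Equiv.sum_comp _ g, ← sum_mul, hK, zero_mul]

end PermutationSums

section Blocks

def block (n t1 t2 : ℕ) : Finset (Fin n) := {i | t1 ≤ (i : ℕ) ∧ (i : ℕ) < t2}

noncomputable def blockSum (K : Fin n → Fin n → ℝ) (π : Equiv.Perm (Fin n))
    (s : Finset (Fin n)) : ℝ :=
  ∑ i ∈ s, ∑ j ∈ s, K (π i) (π j)

noncomputable def rowSum (R : Fin n → Fin n → ℝ) (a : Fin n) : ℝ := ∑ b, R a b

noncomputable def hoeffdingKernel (R : Fin n → Fin n → ℝ) (a b : Fin n) : ℝ :=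
  if a = b then 0
  else R a b - (rowSum R a + rowSum R b) / ((n : ℝ) - 2)
    + (∑ c, rowSum R c) / (((n : ℝ) - 1) * ((n : ℝ) - 2))

lemma card_block {t1 t2 : ℕ} (h2n : t2 ≤ n) : (block n t1 t2).card = t2 - t1 := by
  have hmap : (block n t1 t2).map Fin.valEmbedding = Ico t1 t2 := by
    ext a
    simp only [block, mem_map, mem_filter, mem_univ, true_and, Fin.valEmbedding_apply, mem_Ico]
    exact ⟨fun ⟨i, hi, hia⟩ => hia ▸ hi, fun ha => ⟨⟨a, by omega⟩, ha, rfl⟩⟩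
  rw [← card_map, hmap, Nat.card_Ico]

lemma U1_eq_blockSum (R : Fin n → Fin n → ℝ) (π : Equiv.Perm (Fin n)) (t1 t2 : ℕ) :
    U1 n R π t1 t2 = blockSum R π (block n t1 t2) := by
  simp only [U1, blockSum, block, sum_filter, ← and_assoc, ite_and, sum_ite_irrel, sum_const_zero]

lemma U2_eq_blockSum_compl (R : Fin n → Fin n → ℝ) (π : Equiv.Perm (Fin n)) (t1 t2 : ℕ) :
    U2 n R π t1 t2 = blockSum R π (block n t1 t2)ᶜ := by
  simp only [U2, blockSum, block, compl_filter, sum_filter, not_and_or, not_le, not_lt, ite_and,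
    sum_ite_irrel, sum_const_zero]

variable {R : Fin n → Fin n → ℝ}

lemma hoeffdingKernel_comm (hsym : ∀ a b, R a b = R b a) (a b : Fin n) :
    hoeffdingKernel R a b = hoeffdingKernel R b a := by
  by_cases hab : a = b
  · rw [hab]
  · simp only [hoeffdingKernel, hab, Ne.symm hab, if_false, hsym a b, add_comm (rowSum R a)]

lemma sum_hoeffdingKernel (hn : 3 ≤ n) (hdiag : ∀ a, R a a = 0) (a : Fin n) :
    ∑ b, hoeffdingKernel R a b = 0 := by
  have h1 : (n : ℝ) - 1 ≠ 0 := sub_ne_zero.2 (by norm_cast; omega)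
  have h2 : (n : ℝ) - 2 ≠ 0 := sub_ne_zero.2 (by norm_cast; omega)
  simp only [hoeffdingKernel]
  rw [sum_ite_eq_zero_of_mem _ _ (mem_univ a)]
  simp only [sum_add_distrib, sum_sub_distrib, ← sum_div, sum_const, card_univ, Fintype.card_fin,
    nsmul_eq_mul, hdiag]
  rw [← rowSum]
  field_simp
  ring

lemma blockSum_eq_blockSum_hoeffdingKernel_add (hdiag : ∀ a, R a a = 0)
    (π : Equiv.Perm (Fin n)) (s : Finset (Fin n)) :
    blockSum R π s = blockSum (hoeffdingKernel R) π s
      + 2 * (((s.card : ℝ) - 1) / ((n : ℝ) - 2)) * ∑ i ∈ s, rowSum R (π i)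
      - s.card * ((s.card : ℝ) - 1) * (∑ c, rowSum R c) / (((n : ℝ) - 1) * ((n : ℝ) - 2)) := by
  have hR : ∀ i j, R (π i) (π j) = hoeffdingKernel R (π i) (π j)
      + if i = j then 0 else rowSum R (π i) / ((n : ℝ) - 2) + rowSum R (π j) / ((n : ℝ) - 2)
        + -((∑ c, rowSum R c) / (((n : ℝ) - 1) * ((n : ℝ) - 2))) := by
    intro i j
    by_cases hij : i = j
    · simp [hij, hoeffdingKernel, hdiag]
    · simp only [hoeffdingKernel, π.injective.ne hij, hij, if_false]
      ring
  simp only [blockSum, hR, sum_add_distrib]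
  rw [sum_sum_ite_eq_zero_add_add, ← sum_div]
  ring

lemma blockSum_compl (hsym : ∀ a b, R a b = R b a) (π : Equiv.Perm (Fin n))
    (s : Finset (Fin n)) :
    blockSum R π sᶜ = blockSum R π s - 2 * ∑ i ∈ s, rowSum R (π i) + ∑ c, rowSum R c := by
  have hrow : ∀ t : Finset (Fin n), ∑ i ∈ t, rowSum R (π i)
      = ∑ i ∈ t, ∑ j ∈ s, R (π i) (π j) + ∑ i ∈ t, ∑ j ∈ sᶜ, R (π i) (π j) := by
    intro t
    rw [← sum_add_distrib]
    refine sum_congr rfl fun i _ => ?_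
    rw [sum_add_sum_compl, rowSum, ← Equiv.sum_comp π]
  have htotal : ∑ c, rowSum R c = ∑ i ∈ s, rowSum R (π i) + ∑ i ∈ sᶜ, rowSum R (π i) := by
    rw [sum_add_sum_compl, Equiv.sum_comp π]
  have hcross : ∑ i ∈ s, ∑ j ∈ sᶜ, R (π i) (π j) = ∑ i ∈ sᶜ, ∑ j ∈ s, R (π i) (π j) := by
    rw [sum_comm]
    exact sum_congr rfl fun _ _ => sum_congr rfl fun _ _ => hsym _ _
  simp only [blockSum]
  linarith [hrow s, hrow sᶜ]

end Blocks

lemma pcov_blockSum_eq_zero {K : Fin n → Fin n → ℝ} (hrow : ∀ a, ∑ b, K a b = 0)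
    (hcol : ∀ b, ∑ a, K a b = 0) (hdiag : ∀ a, K a a = 0) (s s' : Finset (Fin n))
    (g : Fin n → ℝ) : pcov n (fun π => blockSum K π s) (fun π => ∑ k ∈ s', g (π k)) = 0 := by
  have hmean : pexp n (fun π => blockSum K π s) = 0 := by
    rw [pexp, div_eq_zero_iff]
    left
    simp only [blockSum]
    rw [sum_comm]
    refine sum_eq_zero fun i _ => ?_
    rw [sum_comm]
    refine sum_eq_zero fun j _ => ?_
    simpa using sum_perm_mul_apply_eq_zero hrow hcol hdiag 1 i j i
  rw [pcov_of_pexp_eq_zero hmean, pexp, div_eq_zero_iff]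
  left
  simp only [blockSum, sum_mul, mul_sum]
  rw [sum_comm]
  refine sum_eq_zero fun k _ => ?_
  rw [sum_comm]
  refine sum_eq_zero fun i _ => ?_
  rw [sum_comm]
  exact sum_eq_zero fun j _ => sum_perm_mul_apply_eq_zero hrow hcol hdiag g i j k

lemma pcov_Uw_Udiff_eq_zero {R : Fin n → Fin n → ℝ} (hn : 3 ≤ n) (hsym : ∀ a b, R a b = R b a)
    (hdiag : ∀ a, R a a = 0) {t1 t2 : ℕ} (h12 : t1 < t2) (h2n : t2 ≤ n) :
    pcov n (fun π => Uw n R π t1 t2) (fun π => Udiff n R π t1 t2) = 0 := by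
  set s := block n t1 t2
  set S := ∑ c, rowSum R c
  have hm : (s.card : ℝ) = t2 - t1 := by rw [card_block h2n, Nat.cast_sub h12.le]
  have hn1 : (n : ℝ) - 1 ≠ 0 := sub_ne_zero.2 (by norm_cast; omega)
  have hn2 : (n : ℝ) - 2 ≠ 0 := sub_ne_zero.2 (by norm_cast; omega)
  have hUw : ∀ π, Uw n R π t1 t2 = 1 * blockSum (hoeffdingKernel R) π s
      + 0 * ∑ i ∈ s, rowSum R (π i)
      + (((t2 : ℝ) - t1 - 1) * S / ((n : ℝ) - 2)
        - ((t2 : ℝ) - t1) * ((t2 : ℝ) - t1 - 1) * S / (((n : ℝ) - 1) * ((n : ℝ) - 2))) := by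
    intro π
    rw [Uw, U1_eq_blockSum, U2_eq_blockSum_compl, blockSum_compl hsym,
      blockSum_eq_blockSum_hoeffdingKernel_add hdiag, hm]
    field_simp
    ring
  have hUdiff : ∀ π, Udiff n R π t1 t2 = 0 * blockSum (hoeffdingKernel R) π s
      + 2 * ∑ i ∈ s, rowSum R (π i) + -S := by
    intro π
    rw [Udiff, U1_eq_blockSum, U2_eq_blockSum_compl, blockSum_compl hsym]
    ring
  rw [pcov_eq_of_affine hUw hUdiff, pcov_blockSum_eq_zero (sum_hoeffdingKernel hn hdiag)
    (fun b => by simpa only [hoeffdingKernel_comm hsym _ b] using sum_hoeffdingKernel hn hdiag b)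
    (fun a => if_pos rfl)]
  ring

end RING

open Matrix in
/-- For all integers `0 ≤ t1 < t2 ≤ n`, if `Var(U_w(t1,t2)) > 0` and
`Var(U_diff(t1,t2)) > 0` under the permutation null distribution, then the 2×2
covariance matrix `Σ(t1,t2)` of `(U1^π, U2^π)` is invertible and, for every
permutation `π`, the Mahalanobis-type statistic decomposes as
`T_R^π(t1,t2) = Z_w^π(t1,t2)² + Z_diff^π(t1,t2)²`. -/
theorem stmt8 (n : ℕ) (hn : 4 ≤ n) (R : Fin n → Fin n → ℝ)
    (hsym : ∀ i j, R i j = R j i) (hdiag : ∀ i, R i i = 0)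
    (t1 t2 : ℕ) (h12 : t1 < t2) (h2n : t2 ≤ n)
    (hvarw : 0 < pvar n (fun π => Uw n R π t1 t2))
    (hvard : 0 < pvar n (fun π => Udiff n R π t1 t2)) :
    IsUnit
      (!![pvar n (fun π => U1 n R π t1 t2),
            pcov n (fun π => U1 n R π t1 t2) (fun π => U2 n R π t1 t2);
          pcov n (fun π => U1 n R π t1 t2) (fun π => U2 n R π t1 t2),
            pvar n (fun π => U2 n R π t1 t2)])
      ∧ ∀ π : Equiv.Perm (Fin n),
        ![U1 n R π t1 t2 - pexp n (fun σ => U1 n R σ t1 t2),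
          U2 n R π t1 t2 - pexp n (fun σ => U2 n R σ t1 t2)]
          ⬝ᵥ
          ((!![pvar n (fun π => U1 n R π t1 t2),
                pcov n (fun π => U1 n R π t1 t2) (fun π => U2 n R π t1 t2);
              pcov n (fun π => U1 n R π t1 t2) (fun π => U2 n R π t1 t2),
                pvar n (fun π => U2 n R π t1 t2)])⁻¹
            *ᵥ ![U1 n R π t1 t2 - pexp n (fun σ => U1 n R σ t1 t2),
                 U2 n R π t1 t2 - pexp n (fun σ => U2 n R σ t1 t2)])
        = Zw n R π t1 t2 ^ 2 + Zdiff n R π t1 t2 ^ 2 := by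
  have hn2 : (n : ℝ) - 2 ≠ 0 := sub_ne_zero.2 (by norm_cast; omega)
  set β := ((t2 : ℝ) - t1 - 1) / ((n : ℝ) - 2) with hβ
  have hU1 : ∀ π, U1 n R π t1 t2 = 1 * Uw n R π t1 t2 + β * Udiff n R π t1 t2 + 0 := by
    intro π
    rw [Uw, Udiff, hβ]
    field_simp
    ring
  have hU2 : ∀ π, U2 n R π t1 t2 = 1 * Uw n R π t1 t2 + (β - 1) * Udiff n R π t1 t2 + 0 := by
    intro π
    rw [Uw, Udiff, hβ]
    field_simp
    ring
  have hdet : 1 * (β - 1) - β * 1 ≠ 0 := by norm_num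
  have hcov := pcov_Uw_Udiff_eq_zero (by omega) hsym hdiag h12 h2n
  refine ⟨isUnit_pcovMatrix hU1 hU2 hdet hcov hvarw.ne' hvard.ne', fun π => ?_⟩
  refine (dotProduct_inv_pcovMatrix_mulVec hU1 hU2 hdet hcov hvarw.ne' hvard.ne' π).trans ?_
  rw [Zw, Zdiff, div_pow, div_pow, Real.sq_sqrt hvarw.le, Real.sq_sqrt hvard.le]
end
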